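/- arXiv:2202.13143 — 13 statements merged into one kernel-verified Lean document; each statement's English description precedes it below -/
import Mathlib

section
/- Let p be a prime and r ≥ 1, and set s = ⌊(r−1)/2⌋. Then the number of nonzero squares in Z/p^rZ equals the sum over k from 0 to s of |U(p^{r−2k})^2|, where U(m)^2 is the set of squares of units of Z/mZ. -/
/-- The set of squares of units of `ZMod n`. -/
def unitSquares (n : ℕ) : Set (ZMod n) :=
  {x | ∃ u : (ZMod n)ˣ, (u : ZMod n) ^ 2 = x}

/-- The set of nonzero squares of `ZMod n`. -/
def nonzeroSquares (n : ℕ) : Set (ZMod n) :=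
  {x | x ≠ 0 ∧ ∃ y : ZMod n, y ^ 2 = x}

/-- A (nonempty) sequence is an `A`-weighted zero-sum sequence. -/
def IsWeightedZeroSum {n k : ℕ} (A : Set (ZMod n)) (x : Fin k → ZMod n) : Prop :=
  0 < k ∧ ∃ w : Fin k → ZMod n, (∀ i, w i ∈ A) ∧ ∑ i, w i * x i = 0

/-- The sequence `x` has an `A`-weighted zero-sum subsequence. -/
def HasWZSSubseq {n k : ℕ} (A : Set (ZMod n)) (x : Fin k → ZMod n) : Prop :=
  ∃ I : Finset (Fin k), I.Nonempty ∧ ∃ w : Fin k → ZMod n,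
    (∀ i ∈ I, w i ∈ A) ∧ ∑ i ∈ I, w i * x i = 0

/-- The sequence `x` has an `A`-weighted zero-sum subsequence of consecutive terms. -/
def HasConsecWZS {n k : ℕ} (A : Set (ZMod n)) (x : Fin k → ZMod n) : Prop :=
  ∃ i j : Fin k, i ≤ j ∧ ∃ w : Fin k → ZMod n,
    (∀ t ∈ Finset.Icc i j, w t ∈ A) ∧ ∑ t ∈ Finset.Icc i j, w t * x t = 0

/-- `k` is admissible for the `A`-weighted Davenport constant of `ZMod n`. -/
def DConst (n : ℕ) (A : Set (ZMod n)) (k : ℕ) : Prop :=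
  0 < k ∧ ∀ x : Fin k → ZMod n, HasWZSSubseq A x

/-- `k` is admissible for the constant `C_A` of `ZMod n`. -/
def CConst (n : ℕ) (A : Set (ZMod n)) (k : ℕ) : Prop :=
  0 < k ∧ ∀ x : Fin k → ZMod n, HasConsecWZS A x

/-!
A nonzero square of `ℤ/p^rℤ` is `y²` with `y = p^a m`, `p ∤ m`, hence equals `p^{2a} m²` with
`2a < r`. So the nonzero squares split according to their (even) `p`-adic valuation `2k < r` into
layers `p^{2k} · U(p^{r-2k})²`: these are disjoint because `p ∤ m²`, and each is in bijection with
`U(p^{r-2k})²` because multiplication by `p^{2k}` embeds `ℤ/p^{r-2k}ℤ` into `ℤ/p^rℤ`.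
-/

def scaledLift (d m : ℕ) {n : ℕ} (e : ZMod n) : ZMod m := ((d * e.val : ℕ) : ZMod m)

section scaledLift

variable {d m n : ℕ}

lemma scaledLift_natCast (hm : m = d * n) (a : ℕ) :
    scaledLift d m (a : ZMod n) = ((d * a : ℕ) : ZMod m) := by
  rw [scaledLift, ZMod.natCast_eq_natCast_iff, ZMod.val_natCast, hm]
  exact (Nat.mod_modEq a n).mul_left' d

lemma scaledLift_injective [NeZero n] (hd : d ≠ 0) (hm : m = d * n) :
    Function.Injective (scaledLift d m : ZMod n → ZMod m) := by
  intro a b h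
  rw [scaledLift, scaledLift, ZMod.natCast_eq_natCast_iff, hm] at h
  simpa only [ZMod.natCast_zmod_val] using
    (ZMod.natCast_eq_natCast_iff _ _ n).mpr (Nat.ModEq.mul_left_cancel' hd h)

lemma scaledLift_mem_nonzeroSquares {c : ℕ} [NeZero n] (hc : c ≠ 0) (hn : n ≠ 1)
    (hm : m = c ^ 2 * n) {e : ZMod n} (he : e ∈ unitSquares n) :
    scaledLift (c ^ 2) m e ∈ nonzeroSquares m := by
  have : Fact (1 < n) := ⟨by have := NeZero.ne n; omega⟩
  obtain ⟨u, rfl⟩ := he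
  refine ⟨fun h0 => ?_, ?_⟩
  · have : (u : ZMod n) ^ 2 = 0 :=
      scaledLift_injective (pow_ne_zero 2 hc) hm (h0.trans (by simp [scaledLift]))
    exact (u ^ 2).ne_zero (by simpa using this)
  · have hu : (((u : ZMod n).val ^ 2 : ℕ) : ZMod n) = (u : ZMod n) ^ 2 := by
      push_cast
      rw [ZMod.natCast_zmod_val]
    refine ⟨((c * (u : ZMod n).val : ℕ) : ZMod m), ?_⟩
    rw [← hu, scaledLift_natCast hm]
    push_cast
    ring

end scaledLift

lemma not_dvd_val_of_mem_unitSquares {p k : ℕ} (hp : p.Prime) (hk : k ≠ 0) {e : ZMod (p ^ k)}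
    (he : e ∈ unitSquares (p ^ k)) : ¬ p ∣ e.val := by
  obtain ⟨u, rfl⟩ := he
  have hcop : Nat.Coprime ((u ^ 2 : (ZMod (p ^ k))ˣ) : ZMod (p ^ k)).val (p ^ k) :=
    ZMod.val_coe_unit_coprime _
  push_cast at hcop
  exact fun hdvd => hp.one_lt.ne' (Nat.dvd_one.mp
    (hcop ▸ Nat.dvd_gcd hdvd (dvd_pow_self p hk)))

lemma dvd_of_pow_mul_modEq_pow_mul {p i j r a b : ℕ} (hp : p ≠ 0) (hij : i < j) (hjr : j ≤ r)
    (h : p ^ i * a ≡ p ^ j * b [MOD p ^ r]) : p ∣ a := by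
  have hb : p ^ (i + 1) ∣ p ^ j * b := (pow_dvd_pow p hij).mul_right b
  have ha : p ^ (i + 1) ∣ p ^ i * a :=
    Nat.modEq_zero_iff_dvd.mp ((h.of_dvd (pow_dvd_pow p (by omega))).trans
      (Nat.modEq_zero_iff_dvd.mpr hb))
  rw [pow_succ] at ha
  exact Nat.dvd_of_mul_dvd_mul_left (pow_pos (Nat.pos_of_ne_zero hp) i) ha

/-- The nonzero squares of `ZMod (p ^ r)` whose `p`-adic valuation is `2 * k`. -/
def squareLayer (p r k : ℕ) : Set (ZMod (p ^ r)) :=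
  scaledLift (p ^ (2 * k)) (p ^ r) '' unitSquares (p ^ (r - 2 * k))

section squareLayer

variable {p r : ℕ}

lemma squareLayer_subset_nonzeroSquares (hp : p.Prime) {k : ℕ} (hk : 2 * k < r) :
    squareLayer p r k ⊆ nonzeroSquares (p ^ r) := by
  have : NeZero p := ⟨hp.ne_zero⟩
  rintro _ ⟨e, he, rfl⟩
  rw [pow_mul']
  exact scaledLift_mem_nonzeroSquares (pow_ne_zero k hp.ne_zero)
    (Nat.one_lt_pow (by omega) hp.one_lt).ne' (by rw [← pow_mul', pow_mul_pow_sub p hk.le]) he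

lemma exists_mem_squareLayer (hp : p.Prime) {x : ZMod (p ^ r)} (hx : x ∈ nonzeroSquares (p ^ r)) :
    ∃ k, 2 * k < r ∧ x ∈ squareLayer p r k := by
  have : NeZero p := ⟨hp.ne_zero⟩
  obtain ⟨hx0, y, rfl⟩ := hx
  have hy0 : y.val ≠ 0 := fun h => hx0 (by simp [(ZMod.val_eq_zero y).mp h])
  obtain ⟨a, m, hpm, hym⟩ := Nat.exists_eq_pow_mul_and_not_dvd hy0 p hp.one_lt.ne'
  have hy : y ^ 2 = ((p ^ (2 * a) * m ^ 2 : ℕ) : ZMod (p ^ r)) := by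
    rw [← ZMod.natCast_zmod_val y, hym]
    push_cast
    ring
  have ha : 2 * a < r := by
    by_contra! h
    exact hx0 (by rw [hy, ZMod.natCast_eq_zero_iff]; exact (pow_dvd_pow p h).mul_right _)
  have hcop : m.Coprime (p ^ (r - 2 * a)) :=
    Nat.Coprime.pow_right _ ((Nat.Prime.coprime_iff_not_dvd hp).mpr hpm).symm
  refine ⟨a, ha, ((m ^ 2 : ℕ) : ZMod (p ^ (r - 2 * a))), ⟨ZMod.unitOfCoprime m hcop, ?_⟩, ?_⟩
  · simp
  · rw [scaledLift_natCast (pow_mul_pow_sub p ha.le).symm, hy]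

lemma pairwiseDisjoint_squareLayer (hp : p.Prime) :
    {k | 2 * k < r}.PairwiseDisjoint (squareLayer p r) := by
  suffices ∀ k j, k < j → 2 * j < r → Disjoint (squareLayer p r k) (squareLayer p r j) by
    intro k hk j hj hne
    rcases Nat.lt_or_gt_of_ne hne with h | h
    · exact this k j h hj
    · exact (this j k h hk).symm
  intro k j hkj hj
  rw [Set.disjoint_left]
  rintro _ ⟨e, he, rfl⟩ ⟨e', -, h⟩
  rw [scaledLift, scaledLift, ZMod.natCast_eq_natCast_iff] at h
  exact not_dvd_val_of_mem_unitSquares hp (by omega) he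
    (dvd_of_pow_mul_modEq_pow_mul hp.ne_zero (by omega) (by omega) h.symm)

lemma ncard_squareLayer (hp : p.Prime) {k : ℕ} (hk : 2 * k < r) :
    (squareLayer p r k).ncard = (unitSquares (p ^ (r - 2 * k))).ncard := by
  have : NeZero p := ⟨hp.ne_zero⟩
  exact Set.ncard_image_of_injective _
    (scaledLift_injective (pow_ne_zero _ hp.ne_zero) (pow_mul_pow_sub p hk.le).symm)

lemma nonzeroSquares_eq_biUnion_squareLayer (hp : p.Prime) :
    nonzeroSquares (p ^ r) = ⋃ k ∈ {k | 2 * k < r}, squareLayer p r k := by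
  refine subset_antisymm (fun x hx => ?_) (Set.iUnion₂_subset fun k hk =>
    squareLayer_subset_nonzeroSquares hp hk)
  obtain ⟨k, hk, hx⟩ := exists_mem_squareLayer hp hx
  exact Set.mem_biUnion hk hx

end squareLayer

theorem stmt5 (p r : ℕ) (hp : p.Prime) (hr : 1 ≤ r) :
    (nonzeroSquares (p ^ r)).ncard =
      ∑ k ∈ Finset.range ((r - 1) / 2 + 1), (unitSquares (p ^ (r - 2 * k))).ncard := by
  have : NeZero p := ⟨hp.ne_zero⟩
  have hrange : ∀ k, k ∈ Finset.range ((r - 1) / 2 + 1) ↔ 2 * k < r := fun k => by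
    rw [Finset.mem_range]
    omega
  have hlayers : {k | 2 * k < r} = ↑(Finset.range ((r - 1) / 2 + 1)) :=
    Set.ext fun k => (hrange k).symm
  have hdisj := pairwiseDisjoint_squareLayer (r := r) hp
  rw [hlayers] at hdisj
  rw [nonzeroSquares_eq_biUnion_squareLayer hp, hlayers,
    (Finset.finite_toSet _).ncard_biUnion (fun _ _ => Set.toFinite _) hdisj, finsum_mem_coe_finset]
  exact Finset.sum_congr rfl fun k hk => ncard_squareLayer hp ((hrange k).mp hk)
end

section
/- Let n = p1^{r1}···pk^{rk} be a factorization of n into distinct primes, and let S be a sequence in Z/nZ. Let p be a prime divisor of n with v_p(n) = r. If the image of S under the natural projection Z/nZ → Z/p^rZ is an S(p^r)*-weighted zero-sum sequence, then S is an S(n)*-weighted zero-sum sequence in Z/nZ. -/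
theorem stmt6 (n p : ℕ) (hn : 0 < n) (hp : p.Prime) (hpn : p ∣ n)
    (r : ℕ) (hr : r = n.factorization p) (hdvd : p ^ r ∣ n)
    (l : ℕ) (x : Fin l → ZMod n)
    (h : IsWeightedZeroSum (nonzeroSquares (p ^ r))
      (fun i => ZMod.castHom hdvd (ZMod (p ^ r)) (x i))) :
    IsWeightedZeroSum (nonzeroSquares n) x := by
  obtain ⟨m, hm⟩ := hdvd
  subst hm
  have hm0 : m ≠ 0 := by rintro rfl; simp at hn
  have hq0 : p ^ r ≠ 0 := pow_ne_zero _ hp.pos.ne'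
  have hfm : m.factorization p = 0 := by
    have h2 := hr
    rw [Nat.factorization_mul hq0 hm0] at h2
    rw [hp.factorization_pow] at h2
    simp [hp.factorization] at h2
    omega
  have hpm : ¬ p ∣ m := by
    intro hd
    rcases (Nat.factorization_eq_zero_iff m p).mp hfm with h1 | h1 | h1
    · exact h1 hp
    · exact h1 hd
    · exact hm0 h1
  have hco : (p ^ r).Coprime m := Nat.Coprime.pow_left _ (hp.coprime_iff_not_dvd.mpr hpm)
  let φ : ZMod (p ^ r * m) ≃+* ZMod (p ^ r) × ZMod m := ZMod.chineseRemainder hco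
  have hdvd' : p ^ r ∣ p ^ r * m := Dvd.intro m rfl
  have key : ∀ z : ZMod (p ^ r * m), (φ z).1 = ZMod.castHom hdvd' (ZMod (p ^ r)) z := by
    intro z
    have : (RingHom.fst (ZMod (p ^ r)) (ZMod m)).comp
        (φ : ZMod (p ^ r * m) ≃+* ZMod (p ^ r) × ZMod m).toRingHom
        = ZMod.castHom hdvd' (ZMod (p ^ r)) := RingHom.ext_zmod _ _
    exact congrFun (congrArg DFunLike.coe this) z
  obtain ⟨hl, w, hw, hsum⟩ := h
  refine ⟨hl, fun i => φ.symm (w i, 0), fun i => ?_, ?_⟩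
  · obtain ⟨hne, y, hy⟩ := hw i
    constructor
    · intro h0
      apply hne
      have h3 : φ (φ.symm (w i, 0)) = φ 0 := congrArg φ h0
      rw [φ.apply_symm_apply, map_zero] at h3
      exact congrArg Prod.fst h3
    · refine ⟨φ.symm (y, 0), ?_⟩
      rw [← map_pow]
      congr 1
      simp [Prod.pow_def, hy]
  · apply φ.injective
    rw [map_sum, map_zero]
    have hstep : ∀ i : Fin l, φ (φ.symm (w i, 0) * x i)
        = (w i * ZMod.castHom hdvd' (ZMod (p ^ r)) (x i), 0) := by
      intro i
      rw [map_mul, φ.apply_symm_apply]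
      refine Prod.ext ?_ (by simp)
      simp [key]
    simp only [hstep]
    refine Prod.ext ?_ ?_
    · rw [Prod.fst_sum]
      simpa using hsum
    · rw [Prod.snd_sum]
      simp
end

section
/- Let p be a prime divisor of n and m = p^{v_p(n)}. Then C_{S(n)*} ≤ C_{S(m)*}. -/
/-- Pigeonhole: length-`m` sequences over `ZMod m` always have a consecutive
zero-sum subsequence with all weights `1`. -/
lemma base_CConst (m : ℕ) (hm : 1 < m) : CConst m (nonzeroSquares m) m := by
  haveI : NeZero m := ⟨by omega⟩
  haveI : Fact (1 < m) := ⟨hm⟩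
  refine ⟨by omega, fun x => ?_⟩
  set S : Fin (m + 1) → ZMod m :=
    fun a => ∑ t ∈ Finset.univ.filter (fun t : Fin m => (t : ℕ) < (a : ℕ)), x t with hS
  have hcard : Fintype.card (ZMod m) < Fintype.card (Fin (m + 1)) := by
    simp [ZMod.card]
  obtain ⟨a, b, hab, hSab⟩ := Fintype.exists_ne_map_eq_of_card_lt S hcard
  have main : ∀ a b : Fin (m + 1), (a : ℕ) < (b : ℕ) → S a = S b →
      HasConsecWZS (nonzeroSquares m) x := by
    intro a b hlt hEq
    have hb : (b : ℕ) ≤ m := Nat.lt_succ_iff.mp b.isLt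
    refine ⟨⟨a, by omega⟩, ⟨(b : ℕ) - 1, by omega⟩, by simp [Fin.le_def]; omega,
      fun _ => 1, fun t _ => ⟨one_ne_zero, 1, one_pow 2⟩, ?_⟩
    have hset : Finset.Icc (⟨a, by omega⟩ : Fin m) ⟨(b : ℕ) - 1, by omega⟩ =
        (Finset.univ.filter (fun t : Fin m => (t : ℕ) < (b : ℕ))) \
          (Finset.univ.filter (fun t : Fin m => (t : ℕ) < (a : ℕ))) := by
      ext t
      simp only [Finset.mem_Icc, Finset.mem_sdiff, Finset.mem_filter, Finset.mem_univ,
        true_and, Fin.le_def]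
      constructor
      · rintro ⟨h1, h2⟩; omega
      · rintro ⟨h1, h2⟩; omega
    have hsub : (Finset.univ.filter (fun t : Fin m => (t : ℕ) < (a : ℕ))) ⊆
        (Finset.univ.filter (fun t : Fin m => (t : ℕ) < (b : ℕ))) := by
      intro t ht
      simp only [Finset.mem_filter, Finset.mem_univ, true_and] at ht ⊢
      omega
    rw [hset]
    simp only [one_mul]
    rw [Finset.sum_sdiff_eq_sub hsub]
    show S b - S a = 0
    rw [← hEq]
    exact sub_self _
  rcases Ne.lt_or_gt (fun h : (a : ℕ) = (b : ℕ) => hab (Fin.ext h)) with h | h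
  · exact main a b h hSab
  · exact main b a h hSab.symm

/-- CRT lifting: admissibility transfers from `ZMod m` to `ZMod (m * q)`. -/
lemma key_CConst (m q : ℕ) (hco : Nat.Coprime m q) (k : ℕ)
    (hk : CConst m (nonzeroSquares m) k) : CConst (m * q) (nonzeroSquares (m * q)) k := by
  obtain ⟨hk0, hk⟩ := hk
  refine ⟨hk0, fun x => ?_⟩
  set e := ZMod.chineseRemainder hco
  obtain ⟨i, j, hij, w, hw, hsum⟩ := hk (fun t => (e (x t)).1)
  refine ⟨i, j, hij, fun t => e.symm (w t, 0), fun t ht => ?_, ?_⟩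
  · obtain ⟨hne, y, hy⟩ := hw t ht
    refine ⟨?_, e.symm (y, 0), ?_⟩
    · intro h0
      apply hne
      have : ((w t, 0) : ZMod m × ZMod q) = 0 := by
        have := congrArg e h0
        simpa using this
      exact (Prod.ext_iff.mp this).1
    · rw [← map_pow]
      congr 1
      ext <;> simp [hy]
  · have : e (∑ t ∈ Finset.Icc i j, e.symm (w t, 0) * x t) = 0 := by
      rw [map_sum]
      have : ∀ t, e (e.symm (w t, 0) * x t) = (w t * (e (x t)).1, 0) := by
        intro t
        rw [map_mul]
        simp only [RingEquiv.apply_symm_apply]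
        ext <;> simp
      simp only [this]
      ext
      · rw [Prod.fst_sum]
        simpa using hsum
      · rw [Prod.snd_sum]
        simp
    have := congrArg e.symm this
    simpa using this

theorem stmt7 (n p : ℕ) (hn : 0 < n) (hp : p.Prime) (hpn : p ∣ n)
    (m : ℕ) (hm : m = p ^ n.factorization p) :
    sInf {k | CConst n (nonzeroSquares n) k} ≤
      sInf {k | CConst m (nonzeroSquares m) k} := by
  subst hm
  have hv : 0 < n.factorization p := hp.factorization_pos_of_dvd hn.ne' hpn
  have hm1 : 1 < p ^ n.factorization p := Nat.one_lt_pow hv.ne' hp.one_lt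
  have hco : Nat.Coprime (p ^ n.factorization p) (n / p ^ n.factorization p) :=
    (Nat.coprime_ordCompl hp hn.ne').pow_left _
  have hdvd : p ^ n.factorization p ∣ n := Nat.ordProj_dvd n p
  have hne : n = p ^ n.factorization p * (n / p ^ n.factorization p) :=
    (Nat.mul_div_cancel' hdvd).symm
  -- the RHS set is nonempty
  have hRHS : {k | CConst (p ^ n.factorization p) (nonzeroSquares (p ^ n.factorization p)) k}.Nonempty :=
    ⟨p ^ n.factorization p, base_CConst _ hm1⟩
  set k0 := sInf {k | CConst (p ^ n.factorization p) (nonzeroSquares (p ^ n.factorization p)) k} with hk0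
  have hmem : CConst (p ^ n.factorization p) (nonzeroSquares (p ^ n.factorization p)) k0 :=
    Nat.sInf_mem hRHS
  have hkey := key_CConst (p ^ n.factorization p) (n / p ^ n.factorization p) hco k0 hmem
  rw [← hne] at hkey
  exact Nat.sInf_le hkey
end

section
/- Let p be a prime, r odd, and T a sequence in Z/p^rZ. If the image of T under the natural map Z/p^rZ → Z/pZ is a U(p)^2-weighted zero-sum sequence, then T is an S(p^r)*-weighted zero-sum sequence. -/
/-!
Lift each unit-square weight `u_i²` mod `p` to a unit square `v_i²` mod `p^r`. The sum
`S = ∑ v_i² x_i` then vanishes mod `p`, so `S = p y`. Multiplying all weights by `p^(r-1)` kills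
the sum, since `p^(r-1) S = p^r y = 0`, and keeps them nonzero squares because `r - 1` is even
and `p^(r-1)` is not divisible by `p^r`.
-/

namespace ZMod

theorem exists_eq_natCast_mul_of_castHom_eq_zero {m n : ℕ} (h : m ∣ n) {a : ZMod n}
    (ha : castHom h (ZMod m) a = 0) : ∃ y : ZMod n, a = m * y := by
  obtain ⟨z, rfl⟩ := intCast_surjective a
  rw [map_intCast, intCast_zmod_eq_zero_iff_dvd] at ha
  obtain ⟨c, rfl⟩ := ha
  exact ⟨c, by push_cast; rfl⟩

theorem exists_unit_sq_castHom_eq {m n : ℕ} [NeZero n] (h : m ∣ n) {w : ZMod m}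
    (hw : w ∈ unitSquares m) : ∃ v : (ZMod n)ˣ, castHom h (ZMod m) ((v : ZMod n) ^ 2) = w := by
  obtain ⟨u, rfl⟩ := hw
  obtain ⟨v, rfl⟩ := unitsMap_surjective h u
  exact ⟨v, by rw [map_pow, unitsMap_val, castHom_apply]⟩

theorem natCast_pow_mul_unit_sq_mem_nonzeroSquares {p e r : ℕ} (hp : 1 < p) (he : Even e)
    (her : e < r) (v : (ZMod (p ^ r))ˣ) :
    (p : ZMod (p ^ r)) ^ e * (v : ZMod (p ^ r)) ^ 2 ∈ nonzeroSquares (p ^ r) := by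
  obtain ⟨s, rfl⟩ := he
  refine ⟨fun h0 => ?_, (p : ZMod (p ^ r)) ^ s * v, by ring⟩
  have hpe : ((p ^ (s + s) : ℕ) : ZMod (p ^ r)) = 0 := by
    exact_mod_cast ((v.isUnit.pow 2).mul_left_eq_zero).mp h0
  rw [natCast_eq_zero_iff, Nat.pow_dvd_pow_iff_le_right hp] at hpe
  omega

end ZMod

theorem stmt8 (p : ℕ) (hp : p.Prime) (r : ℕ) (hr : Odd r)
    (hdp : p ∣ p ^ r) (k : ℕ) (x : Fin k → ZMod (p ^ r))
    (h : IsWeightedZeroSum (unitSquares p)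
      (fun i => ZMod.castHom hdp (ZMod p) (x i))) :
    IsWeightedZeroSum (nonzeroSquares (p ^ r)) x := by
  obtain ⟨hk, w, hw, hsum⟩ := h
  have : NeZero (p ^ r) := ⟨pow_ne_zero r hp.ne_zero⟩
  choose v hv using fun i => ZMod.exists_unit_sq_castHom_eq hdp (hw i)
  obtain ⟨y, hy⟩ := ZMod.exists_eq_natCast_mul_of_castHom_eq_zero hdp
    (a := ∑ i, (v i : ZMod (p ^ r)) ^ 2 * x i) (by simpa only [map_sum, map_mul, hv] using hsum)
  have hr1 : r - 1 + 1 = r := Nat.sub_add_cancel hr.pos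
  refine ⟨hk, fun i => (p : ZMod (p ^ r)) ^ (r - 1) * (v i : ZMod (p ^ r)) ^ 2,
    fun i => ZMod.natCast_pow_mul_unit_sq_mem_nonzeroSquares hp.one_lt
      (Nat.Odd.sub_odd hr odd_one) (by omega) (v i), ?_⟩
  calc ∑ i, (p : ZMod (p ^ r)) ^ (r - 1) * (v i : ZMod (p ^ r)) ^ 2 * x i
      = (p : ZMod (p ^ r)) ^ (r - 1) * ∑ i, (v i : ZMod (p ^ r)) ^ 2 * x i := by
        simp only [Finset.mul_sum, mul_assoc]
    _ = ((p ^ r : ℕ) : ZMod (p ^ r)) * y := by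
        rw [hy, ← mul_assoc, ← pow_succ, hr1]; push_cast; rfl
    _ = 0 := by rw [ZMod.natCast_self, zero_mul]
end

section
/- Let r be odd. Then every sequence of length 2 in Z/2^rZ has a subsequence of consecutive terms which is an S(2^r)*-weighted zero-sum sequence; that is, C_{S(2^r)*} ≤ 2. -/
lemma wmem (r : ℕ) (hr : Odd r) : ((2 : ZMod (2^r))^(r-1)) ∈ nonzeroSquares (2^r) := by
  obtain ⟨m, hm⟩ := hr
  constructor
  · have h : ((2:ZMod (2^r))^(r-1)) = ((2^(r-1) : ℕ) : ZMod (2^r)) := by push_cast; ring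
    rw [h, Ne, ZMod.natCast_eq_zero_iff]
    intro h2
    have := Nat.le_of_dvd (by positivity) h2
    have : 2^r ≤ 2^(r-1) := this
    have := pow_lt_pow_right₀ (by norm_num : (1:ℕ) < 2) (by omega : r - 1 < r)
    omega
  · exact ⟨2^((r-1)/2), by rw [← pow_mul]; congr 1; omega⟩

lemma wkill (r : ℕ) (hr : 1 ≤ r) (v : ℕ) (h : 2 ∣ v) :
    ((2^(r-1) * v : ℕ) : ZMod (2^r)) = 0 := by
  rw [ZMod.natCast_eq_zero_iff]
  obtain ⟨y, rfl⟩ := h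
  have h2r : (2:ℕ)^r = 2^(r-1) * 2 := by rw [← pow_succ]; congr 1; omega
  exact ⟨y, by rw [h2r]; ring⟩

lemma wkill' (r : ℕ) (hr : 1 ≤ r) (a : ZMod (2^r)) (h : 2 ∣ a.val) :
    (2 : ZMod (2^r))^(r-1) * a = 0 := by
  have ha : ((a.val : ℕ) : ZMod (2^r)) = a := by
    simp [ZMod.natCast_val, ZMod.cast_id]
  calc (2 : ZMod (2^r))^(r-1) * a
      = ((2^(r-1) * a.val : ℕ) : ZMod (2^r)) := by push_cast [ha]; ring
    _ = 0 := wkill r hr a.val h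

theorem stmt9 (r : ℕ) (hr : Odd r) :
    (∀ x : Fin 2 → ZMod (2 ^ r), HasConsecWZS (nonzeroSquares (2 ^ r)) x) ∧
    sInf {k | CConst (2 ^ r) (nonzeroSquares (2 ^ r)) k} ≤ 2 := by
  have hr1 : 1 ≤ r := hr.pos
  set w : ZMod (2^r) := (2 : ZMod (2^r))^(r-1) with hw
  have hwmem := wmem r hr
  have main : ∀ x : Fin 2 → ZMod (2 ^ r), HasConsecWZS (nonzeroSquares (2 ^ r)) x := by
    intro x
    rcases Nat.even_or_odd (x 0).val with h0 | h0
    · refine ⟨0, 0, le_refl _, fun _ => w, fun t _ => hwmem, ?_⟩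
      have : Finset.Icc (0 : Fin 2) 0 = {0} := by decide
      rw [this, Finset.sum_singleton]
      exact wkill' r hr1 (x 0) h0.two_dvd
    rcases Nat.even_or_odd (x 1).val with h1 | h1
    · refine ⟨1, 1, le_refl _, fun _ => w, fun t _ => hwmem, ?_⟩
      have : Finset.Icc (1 : Fin 2) 1 = {1} := by decide
      rw [this, Finset.sum_singleton]
      exact wkill' r hr1 (x 1) h1.two_dvd
    · refine ⟨0, 1, by decide, fun _ => w, fun t _ => hwmem, ?_⟩
      have hIcc : Finset.Icc (0 : Fin 2) 1 = {0, 1} := by decide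
      rw [hIcc, Finset.sum_insert (by decide), Finset.sum_singleton]
      have hval : ((x 0).val : ZMod (2^r)) = x 0 ∧ (((x 1).val : ℕ) : ZMod (2^r)) = x 1 := by
        constructor <;> simp [ZMod.natCast_val, ZMod.cast_id]
      calc w * x 0 + w * x 1
          = ((2^(r-1) * ((x 0).val + (x 1).val) : ℕ) : ZMod (2^r)) := by
            push_cast [hval.1, hval.2]; ring
        _ = 0 := wkill r hr1 _ (h0.add_odd h1).two_dvd
  refine ⟨main, Nat.sInf_le ⟨by norm_num, main⟩⟩
end

section
/- Let n be even with v_2(n) odd. Then D_{S(n)*} = C_{S(n)*} = 2. -/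
theorem stmt10 (n : ℕ) (hn : 0 < n) (heven : 2 ∣ n)
    (hv : Odd (n.factorization 2)) :
    IsLeast {k | DConst n (nonzeroSquares n) k} 2 ∧
    IsLeast {k | CConst n (nonzeroSquares n) k} 2 := by
  haveI : NeZero n := ⟨hn.ne'⟩
  haveI : Fact (1 < n) := ⟨lt_of_lt_of_le one_lt_two (Nat.le_of_dvd hn heven)⟩
  set e := n.factorization 2 with he
  have he1 : 1 ≤ e := Nat.Prime.factorization_pos_of_dvd Nat.prime_two hn.ne' heven
  obtain ⟨j, hj⟩ := hv
  set m := n / 2 ^ e with hm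
  have hnm : 2 ^ e * m = n := Nat.ordProj_mul_ordCompl_eq_self n 2
  have hmodd : ¬ 2 ∣ m := Nat.not_dvd_ordCompl Nat.prime_two hn.ne'
  -- the magic weight
  set σ : ZMod n := ((m ^ 2 * 2 ^ (e - 1) : ℕ) : ZMod n) with hσ
  have key : ∀ N : ℕ, 2 ∣ N → ((m ^ 2 * 2 ^ (e - 1) * N : ℕ) : ZMod n) = 0 := by
    intro N hN
    rw [ZMod.natCast_eq_zero_iff]
    obtain ⟨k, rfl⟩ := hN
    refine ⟨m * k, ?_⟩
    rw [← hnm]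
    have h2e : 2 ^ e = 2 ^ (e - 1) * 2 := by
      rw [← pow_succ]; congr 1; omega
    rw [h2e]; ring
  have hσmem : σ ∈ nonzeroSquares n := by
    constructor
    · intro h0
      rw [hσ, ZMod.natCast_eq_zero_iff] at h0
      have hd : 2 ^ e ∣ m ^ 2 * 2 ^ (e - 1) :=
        dvd_trans ⟨m, hnm.symm⟩ h0
      have hc : Nat.Coprime (2 ^ e) (m ^ 2) :=
        Nat.Coprime.pow _ _ ((Nat.Prime.coprime_iff_not_dvd Nat.prime_two).mpr hmodd)
      have := hc.dvd_of_dvd_mul_left hd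
      have hle := (Nat.pow_dvd_pow_iff_le_right (by norm_num : 1 < 2)).mp this
      omega
    · refine ⟨((m * 2 ^ ((e - 1) / 2) : ℕ) : ZMod n), ?_⟩
      rw [hσ]
      have hnat : (m * 2 ^ ((e - 1) / 2)) ^ 2 = m ^ 2 * 2 ^ (e - 1) := by
        have h12 : (e - 1) / 2 * 2 = e - 1 := by omega
        rw [mul_pow, ← pow_mul, h12]
      rw [← hnat]
      push_cast
      ring
  have kill : ∀ N : ℕ, 2 ∣ N → σ * ((N : ℕ) : ZMod n) = 0 := by
    intro N hN
    rw [hσ, ← Nat.cast_mul]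
    exact key N hN
  have kill1 : ∀ x : ZMod n, 2 ∣ x.val → σ * x = 0 := by
    intro x hx
    have := kill x.val hx
    rwa [ZMod.natCast_zmod_val] at this
  -- every pair has a weighted zero-sum subsequence, consecutive
  have main : ∀ x : Fin 2 → ZMod n, ∃ i j : Fin 2, i ≤ j ∧
      (∀ t ∈ Finset.Icc i j, σ ∈ nonzeroSquares n) ∧
      ∑ t ∈ Finset.Icc i j, σ * x t = 0 := by
    intro x
    by_cases h0 : 2 ∣ (x 0).val
    · refine ⟨0, 0, le_refl _, fun _ _ => hσmem, ?_⟩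
      rw [Finset.Icc_self, Finset.sum_singleton]
      exact kill1 _ h0
    · by_cases h1 : 2 ∣ (x 1).val
      · refine ⟨1, 1, le_refl _, fun _ _ => hσmem, ?_⟩
        rw [Finset.Icc_self, Finset.sum_singleton]
        exact kill1 _ h1
      · refine ⟨0, 1, by decide, fun _ _ => hσmem, ?_⟩
        have hIcc : Finset.Icc (0 : Fin 2) 1 = {0, 1} := by decide
        rw [hIcc, Finset.sum_pair (by decide : (0 : Fin 2) ≠ 1)]
        have hsum : σ * x 0 + σ * x 1 = σ * (((x 0).val + (x 1).val : ℕ) : ZMod n) := by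
          push_cast [ZMod.natCast_zmod_val]
          ring
        rw [hsum]
        exact kill _ (by omega)
  -- lower bound: length 1 does not suffice
  have lb1 : ∀ I : Finset (Fin 1), I.Nonempty → ∀ w : Fin 1 → ZMod n,
      (∀ i ∈ I, w i ∈ nonzeroSquares n) → ∑ i ∈ I, w i * (1 : ZMod n) ≠ 0 := by
    intro I ⟨i, hi⟩ w hw hsum
    have hI : I = {i} := Finset.eq_singleton_iff_unique_mem.mpr
      ⟨hi, fun j _ => Subsingleton.elim j i⟩
    rw [hI, Finset.sum_singleton, mul_one] at hsum
    exact (hw i hi).1 hsum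
  constructor
  · constructor
    · refine ⟨by norm_num, fun x => ?_⟩
      obtain ⟨i, j, hij, hwmem, hzero⟩ := main x
      exact ⟨Finset.Icc i j, ⟨i, Finset.mem_Icc.mpr ⟨le_refl i, hij⟩⟩, fun _ => σ,
        fun t ht => hσmem, hzero⟩
    · intro k hk
      by_contra hlt
      push_neg at hlt
      interval_cases k
      · exact absurd hk.1 (by norm_num)
      · obtain ⟨I, hIne, w, hw, hsum⟩ := hk.2 (fun _ => (1 : ZMod n))
        exact lb1 I hIne w hw hsum
  · constructor
    · refine ⟨by norm_num, fun x => ?_⟩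
      obtain ⟨i, j, hij, hwmem, hzero⟩ := main x
      exact ⟨i, j, hij, fun _ => σ, fun t _ => hσmem, hzero⟩
    · intro k hk
      by_contra hlt
      push_neg at hlt
      interval_cases k
      · exact absurd hk.1 (by norm_num)
      · obtain ⟨i, j, hij, w, hw, hsum⟩ := hk.2 (fun _ => (1 : ZMod n))
        have hji : i = j := Subsingleton.elim i j
        subst hji
        refine lb1 (Finset.Icc i i) ⟨i, Finset.mem_Icc.mpr ⟨le_refl i, le_refl i⟩⟩ w hw ?_
        simpa using hsum
end

section
/- Let r ≥ 2 be even and let S = (x_1, x_2, x_3) be a sequence of units in Z/2^rZ whose image under the natural map Z/2^rZ → Z/4Z is (1,1,1). Then S has no S(2^r)*-weighted zero-sum subsequence. -/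
lemma sq_struct (r : ℕ) (hre : Even r) (w : ZMod (2^r))
    (hw : w ∈ nonzeroSquares (2^r)) :
    ∃ a : ℕ, 2*a+2 ≤ r ∧ (4:ℤ)^(a+1) ∣ ((w.val : ℤ) - 4^a) := by
  haveI : NeZero (2^r) := ⟨by positivity⟩
  obtain ⟨hw0, y, hy⟩ := hw
  set n : ℕ := y.val with hn
  have hn0 : n ≠ 0 := by
    intro h
    apply hw0
    have : y = 0 := by rwa [← ZMod.val_eq_zero]
    rw [← hy, this]; ring
  set a : ℕ := n.factorization 2 with hadef
  set m : ℕ := n / 2 ^ a with hmdef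
  have hfac : 2 ^ a * m = n := Nat.ordProj_mul_ordCompl_eq_self n 2
  have hmodd : ¬ 2 ∣ m := Nat.not_dvd_ordCompl Nat.prime_two hn0
  have hwn : (2:ℤ)^r ∣ ((w.val : ℤ) - (n:ℤ)^2) := by
    have : (((w.val : ℤ) - (n:ℤ)^2 : ℤ) : ZMod (2^r)) = 0 := by
      push_cast
      simp only [ZMod.natCast_val, ZMod.cast_id]
      rw [← hy, hn, ZMod.natCast_val, ZMod.cast_id]; ring
    have h2 := (ZMod.intCast_zmod_eq_zero_iff_dvd _ (2^r)).mp this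
    exact_mod_cast h2
  have h2a : 2*a < r := by
    by_contra h
    push_neg at h
    apply hw0
    have hdvd : (2:ℕ)^r ∣ n^2 := by
      have : n^2 = 2^(2*a) * m^2 := by rw [← hfac]; ring
      rw [this]
      exact Dvd.dvd.mul_right (pow_dvd_pow 2 h) _
    have : ((n:ZMod (2^r)))^2 = 0 := by
      have : ((n^2 : ℕ) : ZMod (2^r)) = 0 := (ZMod.natCast_eq_zero_iff _ _).mpr hdvd
      push_cast at this
      exact this
    rw [← hy]
    rwa [hn, ZMod.natCast_val, ZMod.cast_id] at this
  obtain ⟨k, hk⟩ := hre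
  refine ⟨a, by omega, ?_⟩
  have h4a : (4:ℤ)^a = ((2:ℤ)^a)^2 := by
    rw [show (4:ℤ) = 2^2 by norm_num, ← pow_mul, ← pow_mul, Nat.mul_comm]
  have hn2 : (n:ℤ)^2 = 4^a * (m:ℤ)^2 := by
    have hni : (n:ℤ) = 2^a * m := by exact_mod_cast hfac.symm
    rw [hni, mul_pow, h4a]
  have key : ((w.val : ℤ) - 4^a) = ((w.val : ℤ) - (n:ℤ)^2) + 4^a * ((m:ℤ)^2 - 1) := by
    rw [hn2]; ring
  rw [key]
  apply dvd_add
  · refine dvd_trans ?_ hwn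
    have : (4:ℤ)^(a+1) = 2^(2*a+2) := by
      rw [show (4:ℤ) = 2^2 by norm_num, ← pow_mul]; ring_nf
    rw [this]
    exact pow_dvd_pow 2 (by omega)
  · rw [pow_succ]
    apply mul_dvd_mul_left
    obtain ⟨t, ht⟩ := Nat.odd_iff.mpr (Nat.two_dvd_ne_zero.mp hmodd)
    have : (m:ℤ) = 2*t+1 := by exact_mod_cast ht
    rw [this]
    exact ⟨t^2 + t, by ring⟩

theorem stmt11 (r : ℕ) (hr : 2 ≤ r) (hre : Even r)
    (h4 : (4 : ℕ) ∣ 2 ^ r) (x : Fin 3 → ZMod (2 ^ r))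
    (hu : ∀ i, IsUnit (x i))
    (him : ∀ i, ZMod.castHom h4 (ZMod 4) (x i) = 1) :
    ¬ HasWZSSubseq (nonzeroSquares (2 ^ r)) x := by
  rintro ⟨I, hne, w, hwA, hsum⟩
  haveI : NeZero (2^r) := ⟨by positivity⟩
  haveI : Fact (1 < 2^r) := ⟨by
    calc 1 < 2^2 := by norm_num
    _ ≤ 2^r := Nat.pow_le_pow_right (by norm_num) hr⟩
  set w' : Fin 3 → ZMod (2^r) := fun i => if i ∈ I then w i else 1 with hw'
  have hwA' : ∀ i, w' i ∈ nonzeroSquares (2^r) := by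
    intro i
    by_cases hi : i ∈ I
    · simpa [hw', hi] using hwA i hi
    · simp only [hw', hi, if_neg, if_false]
      exact ⟨one_ne_zero, 1, one_pow 2⟩
  choose a ha hd using fun i => sq_struct r hre (w' i) (hwA' i)
  -- x i ≡ 1 mod 4
  have hX : ∀ i, (4:ℤ) ∣ ((x i).val : ℤ) - 1 := by
    intro i
    have h1 : (((x i).val : ℤ) - 1 : ℤ) = ((((x i).val : ℤ) - 1 : ℤ)) := rfl
    have : ((((x i).val : ℤ) - 1 : ℤ) : ZMod 4) = 0 := by
      push_cast
      have : (((x i).val : ℕ) : ZMod 4) = ZMod.castHom h4 (ZMod 4) (x i) := by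
        simp [ZMod.castHom_apply, ZMod.natCast_val]
      rw [this, him i]
      ring
    exact_mod_cast (ZMod.intCast_zmod_eq_zero_iff_dvd _ 4).mp this
  -- term congruence
  have hterm : ∀ i, (4:ℤ)^(a i + 1) ∣ ((w' i).val : ℤ) * ((x i).val : ℤ) - 4^(a i) := by
    intro i
    have : ((w' i).val : ℤ) * ((x i).val : ℤ) - 4^(a i)
        = ((x i).val : ℤ) * (((w' i).val : ℤ) - 4^(a i)) + 4^(a i) * (((x i).val : ℤ) - 1) := by
      ring
    rw [this]
    apply dvd_add
    · exact Dvd.dvd.mul_left (hd i) _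
    · rw [pow_succ]
      exact mul_dvd_mul dvd_rfl (hX i)
  -- minimum
  obtain ⟨i₀, hi₀, hm⟩ := Finset.exists_mem_eq_inf' hne a
  set m : ℕ := I.inf' hne a with hmdef
  have hmle : ∀ i ∈ I, m ≤ a i := fun i hi => Finset.inf'_le a hi
  have hm2 : 2*m+2 ≤ r := by rw [hm]; exact ha i₀
  -- the integer sum
  set S : ℤ := ∑ i ∈ I, ((w' i).val : ℤ) * ((x i).val : ℤ) with hS
  have hSdvd : (2:ℤ)^r ∣ S := by
    have : ((S : ℤ) : ZMod (2^r)) = 0 := by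
      rw [hS]
      push_cast
      simp only [ZMod.natCast_val, ZMod.cast_id]
      rw [← hsum]
      apply Finset.sum_congr rfl
      intro i hi
      simp [hw', hi]
    exact_mod_cast (ZMod.intCast_zmod_eq_zero_iff_dvd _ (2^r)).mp this
  have hS4 : (4:ℤ)^(m+1) ∣ S := by
    refine dvd_trans ?_ hSdvd
    have : (4:ℤ)^(m+1) = 2^(2*m+2) := by
      rw [show (4:ℤ) = 2^2 by norm_num, ← pow_mul]; ring_nf
    rw [this]
    exact pow_dvd_pow 2 hm2
  -- sum is congruent to c * 4^m
  set J : Finset (Fin 3) := I.filter (fun i => a i = m) with hJ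
  set c : ℕ := J.card with hc
  have hdiff : (4:ℤ)^(m+1) ∣ S - (c : ℤ) * 4^m := by
    have hsplit : S - (c:ℤ) * 4^m
        = ∑ i ∈ I, (((w' i).val : ℤ) * ((x i).val : ℤ) - (if a i = m then (4:ℤ)^m else 0)) := by
      rw [Finset.sum_sub_distrib, hS]
      congr 1
      rw [Finset.sum_ite, Finset.sum_const, Finset.sum_const_zero, hc, hJ]
      push_cast
      ring
    rw [hsplit]
    apply Finset.dvd_sum
    intro i hi
    by_cases hai : a i = m
    · rw [if_pos hai]
      have := hterm i
      rwa [hai] at this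
    · rw [if_neg hai]
      have hgt : m + 1 ≤ a i := by
        have := hmle i hi
        omega
      have h1 : (4:ℤ)^(m+1) ∣ 4^(a i + 1) := pow_dvd_pow 4 (by omega)
      have h2 : (4:ℤ)^(m+1) ∣ 4^(a i) := pow_dvd_pow 4 hgt
      have : ((w' i).val : ℤ) * ((x i).val : ℤ) - 0
          = (((w' i).val : ℤ) * ((x i).val : ℤ) - 4^(a i)) + 4^(a i) := by ring
      rw [this]
      exact dvd_add (dvd_trans h1 (hterm i)) h2
  have hc4 : (4:ℤ)^(m+1) ∣ (c:ℤ) * 4^m := by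
    have := hS4.sub hdiff
    simpa using this
  have h4c : (4:ℕ) ∣ c := by
    rw [pow_succ, mul_comm ((c:ℤ)) ((4:ℤ)^m)] at hc4
    have := (mul_dvd_mul_iff_left (pow_ne_zero m (by norm_num : (4:ℤ) ≠ 0))).mp hc4
    exact_mod_cast this
  have hc1 : 1 ≤ c := by
    rw [hc]
    refine Finset.card_pos.mpr ⟨i₀, ?_⟩
    rw [hJ, Finset.mem_filter]
    exact ⟨hi₀, hm.symm⟩
  have hc3 : c ≤ 3 := by
    rw [hc]
    calc J.card ≤ Finset.univ.card := Finset.card_le_univ J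
    _ = 3 := by simp
  omega
end

section
/- Let p be a prime, r ≥ 2 even, and let (z_1, z_2) be units in Z/p^2Z whose image in Z/pZ is not a Q_p-weighted zero-sum sequence. Let S = (x_1, x_2, y_1) be a sequence of elements of Z/p^rZ whose image under the natural map Z/p^rZ → Z/p^2Z is (z_1, z_2, p). Then S has no S(p^r)*-weighted zero-sum subsequence. -/
theorem stmt12 (p : ℕ) (hp : p.Prime) (r : ℕ) (hr : 2 ≤ r) (hre : Even r)
    (z : Fin 2 → ZMod (p ^ 2)) (hz : ∀ i, IsUnit (z i))
    (hdp : p ∣ p ^ 2)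
    (hnz : ¬ IsWeightedZeroSum (unitSquares p)
      (fun i => ZMod.castHom hdp (ZMod p) (z i)))
    (hd2 : p ^ 2 ∣ p ^ r) (x : Fin 3 → ZMod (p ^ r))
    (h0 : ZMod.castHom hd2 (ZMod (p ^ 2)) (x 0) = z 0)
    (h1 : ZMod.castHom hd2 (ZMod (p ^ 2)) (x 1) = z 1)
    (h2 : ZMod.castHom hd2 (ZMod (p ^ 2)) (x 2) = (p : ZMod (p ^ 2))) :
    ¬ HasWZSSubseq (nonzeroSquares (p ^ r)) x := by
  classical
  rintro ⟨I, hI, w, hw, hsum⟩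
  haveI : Fact p.Prime := ⟨hp⟩
  have hp1 : 1 < p := hp.one_lt
  have hprz : 0 < p ^ r := by positivity
  haveI : NeZero (p ^ r) := ⟨hprz.ne'⟩
  have hpZ : Prime (p : ℤ) := Nat.prime_iff_prime_int.mp hp
  obtain ⟨k, hk⟩ := hre
  -- square roots of the weights
  choose y hy using fun i (hi : i ∈ I) => (hw i hi).2
  have hwne : ∀ i ∈ I, w i ≠ 0 := fun i hi => (hw i hi).1
  set Y : Fin 3 → ℕ := fun i => if h : i ∈ I then (y i h).val else 1 with hYdef
  have hYsq : ∀ i ∈ I, ((Y i : ZMod (p ^ r))) ^ 2 = w i := by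
    intro i hi
    simp only [hYdef, dif_pos hi]
    rw [ZMod.natCast_val, ZMod.cast_id]
    exact hy i hi
  have hYpos : ∀ i, Y i ≠ 0 := by
    intro i hzero
    by_cases hi : i ∈ I
    · apply hwne i hi
      rw [← hYsq i hi, hzero]
      simp
    · simp only [hYdef, dif_neg hi] at hzero
      exact one_ne_zero hzero
  have hYnd : ∀ i ∈ I, ¬ p ^ r ∣ (Y i) ^ 2 := by
    intro i hi hd
    apply hwne i hi
    rw [← hYsq i hi, ← Nat.cast_pow, ZMod.natCast_eq_zero_iff]
    exact hd
  -- p-adic factorization of the Y i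
  set a : Fin 3 → ℕ := fun i => (Y i).factorization p with hadef
  set c : Fin 3 → ℕ := fun i => Y i / p ^ a i with hcdef
  have hYfac : ∀ i, Y i = p ^ a i * c i := fun i =>
    (Nat.ordProj_mul_ordCompl_eq_self (Y i) p).symm
  have hcnd : ∀ i, ¬ p ∣ c i := fun i => Nat.not_dvd_ordCompl hp (hYpos i)
  have hvlt : ∀ i ∈ I, 2 * a i < r := by
    intro i hi
    by_contra h
    push_neg at h
    apply hYnd i hi
    refine dvd_trans (pow_dvd_pow p h) ?_
    rw [hYfac i, mul_pow, ← pow_mul, mul_comm (a i) 2]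
    exact dvd_mul_right _ _
  -- integer lifts
  set X : Fin 3 → ℤ := fun i => ((x i).val : ℤ) with hXdef
  have hXcast : ∀ i, ((X i : ℤ) : ZMod (p ^ r)) = x i := by
    intro i
    simp only [hXdef]
    push_cast
    rw [ZMod.natCast_val, ZMod.cast_id]
  -- the main divisibility
  have hdvd : ((p : ℤ)) ^ r ∣ ∑ i ∈ I, (Y i : ℤ) ^ 2 * X i := by
    have h' : (((p ^ r : ℕ) : ℤ)) ∣ ∑ i ∈ I, (Y i : ℤ) ^ 2 * X i := by
      rw [← ZMod.intCast_zmod_eq_zero_iff_dvd]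
      push_cast
      rw [← hsum]
      refine Finset.sum_congr rfl fun i hi => ?_
      rw [hXcast i, hYsq i hi]
    exact_mod_cast h'
  -- x 2 = p * U2 with p ∤ U2
  have hXc2 : ((X 2 : ℤ) : ZMod (p ^ 2)) = ZMod.castHom hd2 (ZMod (p ^ 2)) (x 2) := by
    simp only [hXdef]
    push_cast
    rw [ZMod.natCast_val, ZMod.castHom_apply]
  obtain ⟨t, ht⟩ : (((p ^ 2 : ℕ) : ℤ)) ∣ X 2 - p := by
    rw [← ZMod.intCast_zmod_eq_zero_iff_dvd]
    push_cast
    rw [hXc2, h2, sub_self]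
  set U2 : ℤ := 1 + p * t with hU2def
  have hX2 : X 2 = p * U2 := by
    have h' : X 2 - (p : ℤ) = (p : ℤ) ^ 2 * t := by exact_mod_cast ht
    rw [hU2def]; ring_nf; ring_nf at h'; linarith
  have hU2nd : ¬ (p : ℤ) ∣ U2 := by
    intro hdv
    have h1' : (p : ℤ) ∣ 1 := (dvd_add_right ⟨t, rfl⟩).mp (by rwa [hU2def, add_comm] at hdv)
    have := Int.le_of_dvd one_pos h1'
    omega
  -- x 0 and x 1 reduce to z 0, z 1 mod p
  have hXmod : ∀ (i3 : Fin 3) (j2 : Fin 2),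
      ZMod.castHom hd2 (ZMod (p ^ 2)) (x i3) = z j2 →
      ((X i3 : ℤ) : ZMod p) = ZMod.castHom hdp (ZMod p) (z j2) := by
    intro i3 j2 hh
    have hc : ZMod.castHom hdp (ZMod p) (z j2)
        = ZMod.castHom (dvd_trans hdp hd2) (ZMod p) (x i3) := by
      rw [← hh, ← RingHom.comp_apply, ZMod.castHom_comp]
    rw [hc, ZMod.castHom_apply, ← ZMod.natCast_val]
    simp only [hXdef]
    push_cast
    rfl
  have hXm0 : ((X 0 : ℤ) : ZMod p) = ZMod.castHom hdp (ZMod p) (z 0) := hXmod 0 0 h0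
  have hXm1 : ((X 1 : ℤ) : ZMod p) = ZMod.castHom hdp (ZMod p) (z 1) := hXmod 1 1 h1
  have hXnd : ∀ (i3 : Fin 3) (j2 : Fin 2),
      ((X i3 : ℤ) : ZMod p) = ZMod.castHom hdp (ZMod p) (z j2) → ¬ (p : ℤ) ∣ X i3 := by
    intro i3 j2 hm hdv
    have h0' : ((X i3 : ℤ) : ZMod p) = 0 := by
      rw [ZMod.intCast_zmod_eq_zero_iff_dvd]; exact_mod_cast hdv
    rw [hm] at h0'
    exact (((hz j2).map (ZMod.castHom hdp (ZMod p))).ne_zero) h0'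
  have hXnd0 : ¬ (p : ℤ) ∣ X 0 := hXnd 0 0 hXm0
  have hXnd1 : ¬ (p : ℤ) ∣ X 1 := hXnd 1 1 hXm1
  -- valuations and unit parts of the terms
  set v : Fin 3 → ℕ := fun i => 2 * a i + (if i = 2 then 1 else 0) with hvdef
  set u : Fin 3 → ℤ := fun i => (c i : ℤ) ^ 2 * (if i = 2 then U2 else X i) with hudef
  have hv0 : v 0 = 2 * a 0 := by simp [hvdef]
  have hv1 : v 1 = 2 * a 1 := by simp [hvdef]
  have hv2 : v 2 = 2 * a 2 + 1 := by simp [hvdef]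
  have hu0 : u 0 = (c 0 : ℤ) ^ 2 * X 0 := by
    simp only [hudef]; rw [if_neg (by decide : (0 : Fin 3) ≠ 2)]
  have hu1 : u 1 = (c 1 : ℤ) ^ 2 * X 1 := by
    simp only [hudef]; rw [if_neg (by decide : (1 : Fin 3) ≠ 2)]
  have hu2 : u 2 = (c 2 : ℤ) ^ 2 * U2 := by
    simp [hudef]
  have hterm : ∀ i, (Y i : ℤ) ^ 2 * X i = (p : ℤ) ^ (v i) * u i := by
    intro i
    simp only [hvdef, hudef]
    by_cases hi2 : i = 2
    · subst hi2
      rw [if_pos rfl, if_pos rfl]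
      rw [hYfac 2, hX2]
      push_cast
      ring
    · rw [if_neg hi2, if_neg hi2]
      rw [hYfac i]
      push_cast
      ring
  have hcndZ : ∀ i, ¬ (p : ℤ) ∣ ((c i : ℕ) : ℤ) := by
    intro i hdv
    exact hcnd i (by exact_mod_cast hdv)
  have hund : ∀ i, ¬ (p : ℤ) ∣ u i := by
    intro i hdv
    simp only [hudef] at hdv
    rcases hpZ.dvd_mul.mp hdv with h | h
    · exact hcndZ i (hpZ.dvd_of_dvd_pow h)
    · by_cases hi2 : i = 2
      · rw [if_pos hi2] at h
        exact hU2nd h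
      · rw [if_neg hi2] at h
        rcases i with ⟨iv, hlt⟩
        interval_cases iv
        · exact hXnd0 h
        · exact hXnd1 h
        · exact hi2 rfl
  have hvlt' : ∀ i ∈ I, v i < r := by
    intro i hi
    have h' := hvlt i hi
    simp only [hvdef]
    split <;> omega
  -- minimum of the valuations
  set m := I.inf' hI v with hmdef
  have hmle : ∀ i ∈ I, m ≤ v i := fun i hi => Finset.inf'_le v hi
  obtain ⟨i₀, hi₀, hmi₀⟩ := Finset.exists_mem_eq_inf' hI v
  have hmv : m = v i₀ := by rw [hmdef]; exact hmi₀
  have hmlt : m < r := by rw [hmv]; exact hvlt' i₀ hi₀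
  -- divide by p^m and reduce mod p
  have hdvd2 : (p : ℤ) ∣ ∑ i ∈ I, (p : ℤ) ^ (v i - m) * u i := by
    have h1' : ∑ i ∈ I, (Y i : ℤ) ^ 2 * X i
        = (p : ℤ) ^ m * ∑ i ∈ I, (p : ℤ) ^ (v i - m) * u i := by
      rw [Finset.mul_sum]
      refine Finset.sum_congr rfl fun i hi => ?_
      have hvi : v i = m + (v i - m) := by have := hmle i hi; omega
      rw [hterm i]
      conv_lhs => rw [hvi]
      rw [pow_add, mul_assoc]
    rw [h1', show r = m + (r - m) by omega, pow_add] at hdvd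
    have hppos : (p : ℤ) ^ m ≠ 0 := by positivity
    have h2'' := (mul_dvd_mul_iff_left hppos).mp hdvd
    exact dvd_trans (dvd_pow_self (p : ℤ) (by omega : r - m ≠ 0)) h2''
  have hzero : ∑ i ∈ I, ((p : ZMod p)) ^ (v i - m) * ((u i : ℤ) : ZMod p) = 0 := by
    have h' := (ZMod.intCast_zmod_eq_zero_iff_dvd _ p).mpr (by exact_mod_cast hdvd2)
    push_cast at h'
    exact h'
  set e : Fin 3 → ZMod p :=
    fun i => if i ∈ I then ((p : ZMod p)) ^ (v i - m) * ((u i : ℤ) : ZMod p) else 0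
    with hedef
  have he : e 0 + e 1 + e 2 = 0 := by
    have hsum3 : ∑ i : Fin 3, e i = 0 := by
      simp only [hedef]
      rw [Finset.sum_ite_mem, Finset.univ_inter]
      exact hzero
    rwa [Fin.sum_univ_three] at hsum3
  have he0 : ∀ i, ¬ (i ∈ I ∧ v i = m) → e i = 0 := by
    intro i hnp
    by_cases hi : i ∈ I
    · have hne : v i ≠ m := fun h => hnp ⟨hi, h⟩
      have := hmle i hi
      simp only [hedef, if_pos hi, ZMod.natCast_self]
      rw [zero_pow (by omega : v i - m ≠ 0), zero_mul]
    · simp only [hedef, if_neg hi]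
  have he1 : ∀ i, (i ∈ I ∧ v i = m) → e i = ((u i : ℤ) : ZMod p) := by
    intro i hp'
    simp only [hedef, if_pos hp'.1, hp'.2, Nat.sub_self, pow_zero, one_mul]
  have hune : ∀ i, ((u i : ℤ) : ZMod p) ≠ 0 := by
    intro i h
    exact hund i (by exact_mod_cast (ZMod.intCast_zmod_eq_zero_iff_dvd _ p).mp h)
  have hPi₀ : i₀ ∈ I ∧ v i₀ = m := ⟨hi₀, hmv.symm⟩
  by_cases hP2 : (2 : Fin 3) ∈ I ∧ v 2 = m
  · have hnp0 : ¬ ((0 : Fin 3) ∈ I ∧ v 0 = m) := by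
      rintro ⟨-, h0'⟩
      have h2'' := hP2.2
      rw [hv0] at h0'; rw [hv2] at h2''
      omega
    have hnp1 : ¬ ((1 : Fin 3) ∈ I ∧ v 1 = m) := by
      rintro ⟨-, h1'⟩
      have h2'' := hP2.2
      rw [hv1] at h1'; rw [hv2] at h2''
      omega
    have h2z : e 2 = 0 := by
      rw [he0 0 hnp0, he0 1 hnp1] at he
      simpa using he
    rw [he1 2 hP2] at h2z
    exact hune 2 h2z
  · have h2' : e 2 = 0 := he0 2 hP2
    by_cases hP0 : (0 : Fin 3) ∈ I ∧ v 0 = m <;> by_cases hP1 : (1 : Fin 3) ∈ I ∧ v 1 = m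
    · -- both survive: contradiction with hnz
      have hsum01 : ((u 0 : ℤ) : ZMod p) + ((u 1 : ℤ) : ZMod p) = 0 := by
        rw [← he1 0 hP0, ← he1 1 hP1]
        rw [h2'] at he
        simpa using he
      apply hnz
      refine ⟨by norm_num,
        fun j => if j = 0 then (c 0 : ZMod p) ^ 2 else (c 1 : ZMod p) ^ 2, ?_, ?_⟩
      · intro j
        dsimp only
        have hcne : ∀ i : Fin 3, ((c i : ℕ) : ZMod p) ≠ 0 := by
          intro i h
          exact hcnd i ((ZMod.natCast_eq_zero_iff _ _).mp h)
        by_cases hj : j = 0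
        · rw [if_pos hj]
          obtain ⟨uu, huu⟩ := (hcne 0).isUnit
          exact ⟨uu, by rw [huu]⟩
        · rw [if_neg hj]
          obtain ⟨uu, huu⟩ := (hcne 1).isUnit
          exact ⟨uu, by rw [huu]⟩
      · have hgoal : (c 0 : ZMod p) ^ 2 * (ZMod.castHom hdp (ZMod p) (z 0))
            + (c 1 : ZMod p) ^ 2 * (ZMod.castHom hdp (ZMod p) (z 1)) = 0 := by
          rw [hu0, hu1] at hsum01
          push_cast at hsum01
          rw [hXm0, hXm1] at hsum01
          exact hsum01
        rw [Fin.sum_univ_two]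
        simpa using hgoal
    · have h0z : e 0 = 0 := by
        rw [he0 1 hP1, h2'] at he
        simpa using he
      rw [he1 0 hP0] at h0z
      exact hune 0 h0z
    · have h1z : e 1 = 0 := by
        rw [he0 0 hP0, h2'] at he
        simpa using he
      rw [he1 1 hP1] at h1z
      exact hune 1 h1z
    · exfalso
      rcases i₀ with ⟨iv, hlt⟩
      interval_cases iv
      · exact hP0 hPi₀
      · exact hP1 hPi₀
      · exact hP2 hPi₀
end

section
/- Let r ≥ 2 be even and p be a prime. If T is a sequence in Z/p^rZ whose image under the natural map Z/p^rZ → Z/p^2Z is a U(p^2)^2-weighted zero-sum sequence, then T is an S(p^r)*-weighted zero-sum sequence. -/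
theorem stmt13 (p : ℕ) (hp : p.Prime) (r : ℕ) (hr : 2 ≤ r) (hre : Even r)
    (hd2 : p ^ 2 ∣ p ^ r) (k : ℕ) (x : Fin k → ZMod (p ^ r))
    (h : IsWeightedZeroSum (unitSquares (p ^ 2))
      (fun i => ZMod.castHom hd2 (ZMod (p ^ 2)) (x i))) :
    IsWeightedZeroSum (nonzeroSquares (p ^ r)) x := by
  obtain ⟨hk, w, hw, hsum⟩ := h
  haveI : NeZero (p ^ r) := ⟨pow_ne_zero _ hp.ne_zero⟩
  haveI : NeZero (p ^ 2) := ⟨pow_ne_zero _ hp.ne_zero⟩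
  choose u hu using hw
  choose v hv using fun i => ZMod.unitsMap_surjective hd2 (u i)
  set m : ZMod (p ^ r) := (p : ZMod (p ^ r)) ^ ((r - 2) / 2) with hm
  have hr2 : 2 * ((r - 2) / 2) = r - 2 := by
    obtain ⟨s, hs⟩ := hre; omega
  have hm2 : m ^ 2 = ((p ^ (r - 2) : ℕ) : ZMod (p ^ r)) := by
    rw [hm, ← pow_mul, mul_comm, hr2]; push_cast; ring
  have hmne : m ^ 2 ≠ 0 := by
    rw [hm2, Ne, ZMod.natCast_eq_zero_iff]
    intro hdvd
    have := (Nat.pow_dvd_pow_iff_le_right hp.one_lt).mp hdvd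
    omega
  refine ⟨hk, fun i => (m * (v i : ZMod (p ^ r))) ^ 2, fun i => ?_, ?_⟩
  · show (m * (v i : ZMod (p ^ r))) ^ 2 ∈ nonzeroSquares (p ^ r)
    constructor
    · intro h0
      apply hmne
      have : (m * (v i : ZMod (p ^ r))) ^ 2 * ((v i)⁻¹ : (ZMod (p ^ r))ˣ) ^ 2 = 0 := by
        rw [h0, zero_mul]
      rw [mul_pow, mul_assoc, ← mul_pow] at this
      simpa using this
    · exact ⟨m * (v i : ZMod (p ^ r)), rfl⟩
  · set S : ZMod (p ^ r) := ∑ i, ((v i : ZMod (p ^ r))) ^ 2 * x i with hS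
    have hcast : ZMod.castHom hd2 (ZMod (p ^ 2)) S = 0 := by
      rw [hS, map_sum]
      rw [← hsum]
      refine Finset.sum_congr rfl fun i _ => ?_
      rw [map_mul, map_pow]
      congr 1
      have : ((ZMod.unitsMap hd2 (v i) : (ZMod (p ^ 2))ˣ) : ZMod (p ^ 2))
          = ZMod.castHom hd2 (ZMod (p ^ 2)) (v i : ZMod (p ^ r)) := rfl
      rw [← hu i, ← hv i, this]
    have hdvd : (p : ℕ) ^ 2 ∣ S.val := by
      have := (ZMod.castHom_apply (h := hd2) S).symm.trans hcast
      rwa [ZMod.cast_eq_val, ZMod.natCast_eq_zero_iff] at this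
    obtain ⟨t, ht⟩ := hdvd
    show ∑ i, (m * (v i : ZMod (p ^ r))) ^ 2 * x i = 0
    have hSval : S = ((p ^ 2 * t : ℕ) : ZMod (p ^ r)) := by
      rw [← ht, ZMod.natCast_val, ZMod.cast_id]
    calc ∑ i, (m * (v i : ZMod (p ^ r))) ^ 2 * x i
        = m ^ 2 * S := by
          rw [hS, Finset.mul_sum]
          refine Finset.sum_congr rfl fun i _ => ?_
          rw [mul_pow]; ring
      _ = 0 := by
          rw [hm2, hSval, ← Nat.cast_mul, ZMod.natCast_eq_zero_iff]
          have : p ^ (r - 2) * (p ^ 2 * t) = p ^ (r - 2 + 2) * t := by ring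
          rw [this, Nat.sub_add_cancel hr]
          exact Dvd.intro t rfl
end

section
/- Let n be an even square. Then D_{S(n)*} = C_{S(n)*} = 4. -/
private lemma sqmod4 (A : ℤ) : (Even A ∧ ∃ s, A^2 = 4*s) ∨ (∃ s, A^2 = 4*s+1) := by
  rcases Int.even_or_odd A with ⟨a, ha⟩ | ⟨a, ha⟩
  · exact Or.inl ⟨⟨a, ha⟩, a*a, by subst ha; ring⟩
  · exact Or.inr ⟨a*a+a, by subst ha; ring⟩

private lemma evens_of_four_dvd {A B C : ℤ} (h : (4:ℤ) ∣ A^2 + B^2 + C^2) :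
    Even A ∧ Even B ∧ Even C := by
  obtain ⟨k, hk⟩ := h
  rcases sqmod4 A with ⟨hA, sa, hsa⟩ | ⟨sa, hsa⟩ <;>
  rcases sqmod4 B with ⟨hB, sb, hsb⟩ | ⟨sb, hsb⟩ <;>
  rcases sqmod4 C with ⟨hC, sc, hsc⟩ | ⟨sc, hsc⟩ <;>
  rw [hsa, hsb, hsc] at hk <;>
  first
  | exact ⟨hA, hB, hC⟩
  | omega

/-- descent: if `4^(α+1)` divides a sum of three squares, it divides each square. -/
private lemma descent : ∀ (α : ℕ) (A B C : ℤ),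
    ((4:ℤ)^(α+1)) ∣ A^2 + B^2 + C^2 →
    ((4:ℤ)^(α+1)) ∣ A^2 ∧ ((4:ℤ)^(α+1)) ∣ B^2 ∧ ((4:ℤ)^(α+1)) ∣ C^2 := by
  intro α
  induction α with
  | zero =>
    intro A B C h
    rw [pow_one] at *
    obtain ⟨⟨a, rfl⟩, ⟨b, rfl⟩, ⟨c, rfl⟩⟩ := evens_of_four_dvd h
    exact ⟨⟨a*a, by ring⟩, ⟨b*b, by ring⟩, ⟨c*c, by ring⟩⟩
  | succ α ih =>
    intro A B C h
    have h4 : (4:ℤ) ∣ A^2 + B^2 + C^2 := dvd_trans (dvd_pow_self 4 (by omega)) h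
    obtain ⟨⟨a, rfl⟩, ⟨b, rfl⟩, ⟨c, rfl⟩⟩ := evens_of_four_dvd h4
    have hs : (a+a)^2 + (b+b)^2 + (c+c)^2 = 4*(a^2+b^2+c^2) := by ring
    rw [hs, pow_succ, mul_comm ((4:ℤ)^(α+1)) 4] at h
    have h' := (mul_dvd_mul_iff_left (by norm_num : (4:ℤ) ≠ 0)).mp h
    obtain ⟨h1, h2, h3⟩ := ih a b c h'
    refine ⟨?_, ?_, ?_⟩
    · have : (a+a)^2 = 4 * a^2 := by ring
      rw [this, pow_succ, mul_comm]
      exact mul_dvd_mul_left 4 h1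
    · have : (b+b)^2 = 4 * b^2 := by ring
      rw [this, pow_succ, mul_comm]
      exact mul_dvd_mul_left 4 h2
    · have : (c+c)^2 = 4 * c^2 := by ring
      rw [this, pow_succ, mul_comm]
      exact mul_dvd_mul_left 4 h3


/-- If `S = p^T * A + p^(T+1) * B` with `p ∤ A` and `T < b2`, then `p^b2 ∤ S`. -/
private lemma keyShape {p : ℕ} (hp : p.Prime) {T b2 : ℕ} (hT : T < b2) {A B : ℤ}
    (hA : ¬ (p:ℤ) ∣ A) : ¬ ((p:ℤ)^b2 ∣ (p:ℤ)^T * A + (p:ℤ)^(T+1) * B) := by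
  intro h
  have h1 : (p:ℤ)^(T+1) ∣ (p:ℤ)^T * A + (p:ℤ)^(T+1) * B :=
    dvd_trans (pow_dvd_pow _ (by omega)) h
  have h2 : (p:ℤ)^(T+1) ∣ (p:ℤ)^T * A := by
    have := dvd_sub h1 (dvd_mul_right ((p:ℤ)^(T+1)) B)
    simpa using this
  rw [pow_succ] at h2
  have h3 : (p:ℤ)^T * A = (p:ℤ)^T * A := rfl
  have hpT : ((p:ℤ)^T) ≠ 0 := pow_ne_zero _ (by exact_mod_cast hp.ne_zero)
  obtain ⟨c, hc⟩ := h2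
  apply hA
  refine ⟨c, ?_⟩
  have : (p:ℤ)^T * A = (p:ℤ)^T * ((p:ℤ) * c) := by rw [hc]; ring
  exact mul_left_cancel₀ hpT this

/-- Chinese remainder existence over ℤ. -/
private lemma crtZ {M N : ℤ} (h : IsCoprime M N) (a b : ℤ) :
    ∃ X : ℤ, M ∣ X - a ∧ N ∣ X - b := by
  obtain ⟨u, v, huv⟩ := h
  refine ⟨a * v * N + b * u * M, ⟨(b - a) * u, ?_⟩, ⟨(a - b) * v, ?_⟩⟩
  · linear_combination a * huv
  · linear_combination b * huv

/-- Pick a common integer `R` that is a "negated nonresidue" mod each odd prime in `s`. -/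
private lemma pickNR (s : Finset ℕ) (hs : ∀ p ∈ s, p.Prime ∧ p ≠ 2) :
    ∃ R : ℤ, ∀ p ∈ s, ¬ IsSquare (-(R : ZMod p)) := by
  classical
  induction s using Finset.induction_on with
  | empty => exact ⟨0, by simp⟩
  | @insert p s hps ih =>
    obtain ⟨R0, hR0⟩ := ih (fun q hq => hs q (Finset.mem_insert_of_mem hq))
    have hp : p.Prime := (hs p (Finset.mem_insert_self p s)).1
    have hp2 : p ≠ 2 := (hs p (Finset.mem_insert_self p s)).2
    haveI : Fact p.Prime := ⟨hp⟩
    have hchar : ringChar (ZMod p) ≠ 2 := by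
      rw [ZMod.ringChar_zmod_n]; exact hp2
    obtain ⟨z, hz⟩ := FiniteField.exists_nonsquare hchar
    -- coprime: p with ∏ s
    have hPcop : IsCoprime ((s.prod id : ℕ) : ℤ) ((p:ℕ) : ℤ) := by
      rw [Nat.isCoprime_iff_coprime]
      rw [Nat.coprime_comm, hp.coprime_iff_not_dvd]
      intro hdvd
      rw [Prime.dvd_finset_prod_iff hp.prime id] at hdvd
      obtain ⟨q, hq, hpq⟩ := hdvd
      have : p = q := ((Nat.prime_dvd_prime_iff_eq hp (hs q (Finset.mem_insert_of_mem hq)).1).mp hpq)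
      exact hps (this ▸ hq)
    obtain ⟨X, hX1, hX2⟩ := crtZ hPcop R0 (-(z.val : ℤ))
    refine ⟨X, ?_⟩
    intro q hq
    rcases Finset.mem_insert.mp hq with rfl | hq'
    · -- q = p
      have : ((X : ZMod q)) = ((-(z.val : ℤ) : ℤ) : ZMod q) := by
        have := (ZMod.intCast_zmod_eq_zero_iff_dvd (X - (-(z.val:ℤ))) q).mpr hX2
        push_cast at this ⊢
        linear_combination this
      rw [this]
      push_cast
      rw [ZMod.natCast_val, ZMod.cast_id]
      simpa using hz
    · -- q ∈ s
      have hqprime : q.Prime := (hs q (Finset.mem_insert_of_mem hq')).1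
      haveI : Fact q.Prime := ⟨hqprime⟩
      have hqdvd : (q:ℤ) ∣ X - R0 := by
        refine dvd_trans ?_ hX1
        exact_mod_cast Int.natCast_dvd_natCast.mpr (Finset.dvd_prod_of_mem id hq')
      have : ((X : ZMod q)) = ((R0 : ZMod q)) := by
        have := (ZMod.intCast_zmod_eq_zero_iff_dvd (X - R0) q).mpr hqdvd
        push_cast at this
        linear_combination this
      rw [this]
      exact hR0 q hq'


private lemma decomp {p : ℕ} (hp : p.Prime) {b : ℕ} {Y : ℤ} (hY : ¬ ((p:ℤ)^(2*b) ∣ Y^2)) :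
    ∃ (c : ℕ) (U : ℤ), c < b ∧ ¬ (p:ℤ) ∣ U ∧ Y^2 = (p:ℤ)^(2*c) * U^2 := by
  have hY0 : Y ≠ 0 := by rintro rfl; simp at hY
  have hna : Y.natAbs ≠ 0 := Int.natAbs_ne_zero.mpr hY0
  obtain ⟨c, u, hu, heq⟩ := Nat.exists_eq_pow_mul_and_not_dvd hna p hp.ne_one
  have hE : Y^2 = (p:ℤ)^(2*c) * (u:ℤ)^2 := by
    have h1 : ((Y.natAbs : ℤ))^2 = Y^2 := Int.natAbs_sq Y
    rw [← h1, heq]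
    push_cast
    ring
  refine ⟨c, (u:ℤ), ?_, by exact_mod_cast fun hd => hu (Int.ofNat_dvd.mp hd), hE⟩
  by_contra hcb
  push_neg at hcb
  apply hY
  rw [hE]
  exact Dvd.dvd.mul_right (pow_dvd_pow _ (by omega)) _

private lemma localLemma (p : ℕ) (hp : p.Prime) (hodd : p ≠ 2) (b : ℕ)
    (X2 X3 : ℤ) (h2 : (p:ℤ) ∣ X2) (h2' : ¬ ((p:ℤ)^2 ∣ X2))
    (h3 : ¬ IsSquare (-(X3 : ZMod p)))
    (Y1 Y2 Y3 : ℤ)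
    (hY1 : Y1 = 0 ∨ ¬ ((p:ℤ)^(2*b) ∣ Y1^2))
    (hY2 : Y2 = 0 ∨ ¬ ((p:ℤ)^(2*b) ∣ Y2^2))
    (hY3 : Y3 = 0 ∨ ¬ ((p:ℤ)^(2*b) ∣ Y3^2))
    (hne : ¬(Y1 = 0 ∧ Y2 = 0 ∧ Y3 = 0)) :
    ¬ ((p:ℤ)^(2*b) ∣ Y1^2 + Y2^2*X2 + Y3^2*X3) := by
  intro hdvd
  haveI : Fact p.Prime := ⟨hp⟩
  have hpZ : Prime (p:ℤ) := Nat.prime_iff_prime_int.mp hp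
  obtain ⟨W, hW, hWnd⟩ : ∃ W, X2 = (p:ℤ) * W ∧ ¬(p:ℤ)∣W := by
    obtain ⟨W, hw⟩ := h2
    refine ⟨W, hw, fun hd => h2' ?_⟩
    obtain ⟨e, he⟩ := hd
    exact ⟨e, by rw [hw, he]; ring⟩
  have hX3 : ¬ (p:ℤ) ∣ X3 := by
    intro hd
    apply h3
    have h0 : (X3 : ZMod p) = 0 := (ZMod.intCast_zmod_eq_zero_iff_dvd X3 p).mpr hd
    rw [h0, neg_zero]
    exact ⟨0, by ring⟩
  have hNR : ∀ (U V : ℤ), ¬(p:ℤ)∣U → ¬(p:ℤ)∣V → ¬ (p:ℤ) ∣ (U^2 + V^2 * X3) := by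
    intro U V hU hV hd
    have hcast : ((U^2 + V^2*X3 : ℤ) : ZMod p) = 0 :=
      (ZMod.intCast_zmod_eq_zero_iff_dvd _ p).mpr hd
    push_cast at hcast
    have hVz : (V : ZMod p) ≠ 0 := fun h0 => hV ((ZMod.intCast_zmod_eq_zero_iff_dvd V p).mp h0)
    apply h3
    refine ⟨(U:ZMod p) * ((V:ZMod p)⁻¹), ?_⟩
    field_simp
    linear_combination -hcast
  -- case analysis
  rcases hY1 with rfl | hn1 <;> rcases hY2 with rfl | hn2 <;> rcases hY3 with rfl | hn3
  · exact hne ⟨rfl, rfl, rfl⟩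
  · -- only 3
    obtain ⟨c3, U3, hc3, hU3, hE3⟩ := decomp hp hn3
    have hA : ¬(p:ℤ) ∣ U3^2 * X3 := fun h => (hpZ.dvd_mul.mp h).elim
      (fun h' => hU3 (hpZ.dvd_of_dvd_pow h')) hX3
    have hsum : (0:ℤ)^2 + 0^2*X2 + Y3^2*X3 = (p:ℤ)^(2*c3) * (U3^2*X3) + (p:ℤ)^(2*c3+1) * 0 := by
      rw [hE3]; ring
    rw [hsum] at hdvd
    exact keyShape hp (show 2*c3 < 2*b by omega) hA hdvd
  · -- only 2
    obtain ⟨c2, U2, hc2, hU2, hE2⟩ := decomp hp hn2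
    have hA : ¬(p:ℤ) ∣ U2^2 * W := fun h => (hpZ.dvd_mul.mp h).elim
      (fun h' => hU2 (hpZ.dvd_of_dvd_pow h')) hWnd
    have hsum : (0:ℤ)^2 + Y2^2*X2 + 0^2*X3 = (p:ℤ)^(2*c2+1) * (U2^2*W) + (p:ℤ)^(2*c2+1+1) * 0 := by
      rw [hE2, hW]; ring
    rw [hsum] at hdvd
    exact keyShape hp (show 2*c2+1 < 2*b by omega) hA hdvd
  · -- 2 and 3
    obtain ⟨c2, U2, hc2, hU2, hE2⟩ := decomp hp hn2
    obtain ⟨c3, U3, hc3, hU3, hE3⟩ := decomp hp hn3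
    have hA2 : ¬(p:ℤ) ∣ U2^2 * W := fun h => (hpZ.dvd_mul.mp h).elim
      (fun h' => hU2 (hpZ.dvd_of_dvd_pow h')) hWnd
    have hA3 : ¬(p:ℤ) ∣ U3^2 * X3 := fun h => (hpZ.dvd_mul.mp h).elim
      (fun h' => hU3 (hpZ.dvd_of_dvd_pow h')) hX3
    rcases le_or_gt c3 c2 with hle | hlt
    · obtain ⟨d, rfl⟩ := Nat.exists_eq_add_of_le hle
      have hsum : (0:ℤ)^2 + Y2^2*X2 + Y3^2*X3
          = (p:ℤ)^(2*c3) * (U3^2*X3) + (p:ℤ)^(2*c3+1) * ((p:ℤ)^(2*d) * (U2^2*W)) := by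
        rw [hE2, hE3, hW]; ring
      rw [hsum] at hdvd
      exact keyShape hp (show 2*c3 < 2*b by omega) hA3 hdvd
    · obtain ⟨e, rfl⟩ := Nat.exists_eq_add_of_lt hlt
      have hsum : (0:ℤ)^2 + Y2^2*X2 + Y3^2*X3
          = (p:ℤ)^(2*c2+1) * (U2^2*W) + (p:ℤ)^(2*c2+1+1) * ((p:ℤ)^(2*e) * (U3^2*X3)) := by
        rw [hE2, hE3, hW]; ring
      rw [hsum] at hdvd
      exact keyShape hp (show 2*c2+1 < 2*b by omega) hA2 hdvd
  · -- only 1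
    obtain ⟨c1, U1, hc1, hU1, hE1⟩ := decomp hp hn1
    have hA : ¬(p:ℤ) ∣ U1^2 := fun h => hU1 (hpZ.dvd_of_dvd_pow h)
    have hsum : Y1^2 + (0:ℤ)^2*X2 + 0^2*X3 = (p:ℤ)^(2*c1) * (U1^2) + (p:ℤ)^(2*c1+1) * 0 := by
      rw [hE1]; ring
    rw [hsum] at hdvd
    exact keyShape hp (show 2*c1 < 2*b by omega) hA hdvd
  · -- 1 and 3
    obtain ⟨c1, U1, hc1, hU1, hE1⟩ := decomp hp hn1
    obtain ⟨c3, U3, hc3, hU3, hE3⟩ := decomp hp hn3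
    have hA1 : ¬(p:ℤ) ∣ U1^2 := fun h => hU1 (hpZ.dvd_of_dvd_pow h)
    have hA3 : ¬(p:ℤ) ∣ U3^2 * X3 := fun h => (hpZ.dvd_mul.mp h).elim
      (fun h' => hU3 (hpZ.dvd_of_dvd_pow h')) hX3
    rcases lt_trichotomy c1 c3 with hlt | heq | hlt
    · obtain ⟨e, rfl⟩ := Nat.exists_eq_add_of_lt hlt
      have hsum : Y1^2 + (0:ℤ)^2*X2 + Y3^2*X3
          = (p:ℤ)^(2*c1) * (U1^2) + (p:ℤ)^(2*c1+1) * ((p:ℤ)^(2*e+1) * (U3^2*X3)) := by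
        rw [hE1, hE3]; ring
      rw [hsum] at hdvd
      exact keyShape hp (show 2*c1 < 2*b by omega) hA1 hdvd
    · subst heq
      have hsum : Y1^2 + (0:ℤ)^2*X2 + Y3^2*X3
          = (p:ℤ)^(2*c1) * (U1^2 + U3^2*X3) + (p:ℤ)^(2*c1+1) * 0 := by
        rw [hE1, hE3]; ring
      rw [hsum] at hdvd
      exact keyShape hp (show 2*c1 < 2*b by omega) (hNR U1 U3 hU1 hU3) hdvd
    · obtain ⟨g, rfl⟩ := Nat.exists_eq_add_of_lt hlt
      have hsum : Y1^2 + (0:ℤ)^2*X2 + Y3^2*X3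
          = (p:ℤ)^(2*c3) * (U3^2*X3) + (p:ℤ)^(2*c3+1) * ((p:ℤ)^(2*g+1) * U1^2) := by
        rw [hE1, hE3]; ring
      rw [hsum] at hdvd
      exact keyShape hp (show 2*c3 < 2*b by omega) hA3 hdvd
  · -- 1 and 2
    obtain ⟨c1, U1, hc1, hU1, hE1⟩ := decomp hp hn1
    obtain ⟨c2, U2, hc2, hU2, hE2⟩ := decomp hp hn2
    have hA1 : ¬(p:ℤ) ∣ U1^2 := fun h => hU1 (hpZ.dvd_of_dvd_pow h)
    have hA2 : ¬(p:ℤ) ∣ U2^2 * W := fun h => (hpZ.dvd_mul.mp h).elim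
      (fun h' => hU2 (hpZ.dvd_of_dvd_pow h')) hWnd
    rcases le_or_gt c1 c2 with hle | hlt
    · obtain ⟨d, rfl⟩ := Nat.exists_eq_add_of_le hle
      have hsum : Y1^2 + Y2^2*X2 + (0:ℤ)^2*X3
          = (p:ℤ)^(2*c1) * (U1^2) + (p:ℤ)^(2*c1+1) * ((p:ℤ)^(2*d) * (U2^2*W)) := by
        rw [hE1, hE2, hW]; ring
      rw [hsum] at hdvd
      exact keyShape hp (show 2*c1 < 2*b by omega) hA1 hdvd
    · obtain ⟨f, rfl⟩ := Nat.exists_eq_add_of_lt hlt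
      have hsum : Y1^2 + Y2^2*X2 + (0:ℤ)^2*X3
          = (p:ℤ)^(2*c2+1) * (U2^2*W) + (p:ℤ)^(2*c2+1+1) * ((p:ℤ)^(2*f) * U1^2) := by
        rw [hE1, hE2, hW]; ring
      rw [hsum] at hdvd
      exact keyShape hp (show 2*c2+1 < 2*b by omega) hA2 hdvd
  · -- all three
    obtain ⟨c1, U1, hc1, hU1, hE1⟩ := decomp hp hn1
    obtain ⟨c2, U2, hc2, hU2, hE2⟩ := decomp hp hn2
    obtain ⟨c3, U3, hc3, hU3, hE3⟩ := decomp hp hn3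
    have hA1 : ¬(p:ℤ) ∣ U1^2 := fun h => hU1 (hpZ.dvd_of_dvd_pow h)
    have hA2 : ¬(p:ℤ) ∣ U2^2 * W := fun h => (hpZ.dvd_mul.mp h).elim
      (fun h' => hU2 (hpZ.dvd_of_dvd_pow h')) hWnd
    have hA3 : ¬(p:ℤ) ∣ U3^2 * X3 := fun h => (hpZ.dvd_mul.mp h).elim
      (fun h' => hU3 (hpZ.dvd_of_dvd_pow h')) hX3
    rcases lt_trichotomy c1 c3 with hlt13 | heq13 | hlt31
    · obtain ⟨e, rfl⟩ := Nat.exists_eq_add_of_lt hlt13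
      rcases le_or_gt c1 c2 with hle | hlt
      · obtain ⟨d, rfl⟩ := Nat.exists_eq_add_of_le hle
        have hsum : Y1^2 + Y2^2*X2 + Y3^2*X3
            = (p:ℤ)^(2*c1) * (U1^2)
              + (p:ℤ)^(2*c1+1) * ((p:ℤ)^(2*d) * (U2^2*W) + (p:ℤ)^(2*e+1) * (U3^2*X3)) := by
          rw [hE1, hE2, hE3, hW]; ring
        rw [hsum] at hdvd
        exact keyShape hp (show 2*c1 < 2*b by omega) hA1 hdvd
      · obtain ⟨f, rfl⟩ := Nat.exists_eq_add_of_lt hlt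
        have hsum : Y1^2 + Y2^2*X2 + Y3^2*X3
            = (p:ℤ)^(2*c2+1) * (U2^2*W)
              + (p:ℤ)^(2*c2+1+1) * ((p:ℤ)^(2*f) * U1^2 + (p:ℤ)^(2*f+2*e+2) * (U3^2*X3)) := by
          rw [hE1, hE2, hE3, hW]; ring
        rw [hsum] at hdvd
        exact keyShape hp (show 2*c2+1 < 2*b by omega) hA2 hdvd
    · subst heq13
      rcases le_or_gt c1 c2 with hle | hlt
      · obtain ⟨d, rfl⟩ := Nat.exists_eq_add_of_le hle
        have hsum : Y1^2 + Y2^2*X2 + Y3^2*X3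
            = (p:ℤ)^(2*c1) * (U1^2 + U3^2*X3) + (p:ℤ)^(2*c1+1) * ((p:ℤ)^(2*d) * (U2^2*W)) := by
          rw [hE1, hE2, hE3, hW]; ring
        rw [hsum] at hdvd
        exact keyShape hp (show 2*c1 < 2*b by omega) (hNR U1 U3 hU1 hU3) hdvd
      · obtain ⟨f, rfl⟩ := Nat.exists_eq_add_of_lt hlt
        have hsum : Y1^2 + Y2^2*X2 + Y3^2*X3
            = (p:ℤ)^(2*c2+1) * (U2^2*W) + (p:ℤ)^(2*c2+1+1) * ((p:ℤ)^(2*f) * (U1^2 + U3^2*X3)) := by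
          rw [hE1, hE2, hE3, hW]; ring
        rw [hsum] at hdvd
        exact keyShape hp (show 2*c2+1 < 2*b by omega) hA2 hdvd
    · obtain ⟨g, rfl⟩ := Nat.exists_eq_add_of_lt hlt31
      rcases le_or_gt c3 c2 with hle | hlt
      · obtain ⟨d, rfl⟩ := Nat.exists_eq_add_of_le hle
        have hsum : Y1^2 + Y2^2*X2 + Y3^2*X3
            = (p:ℤ)^(2*c3) * (U3^2*X3)
              + (p:ℤ)^(2*c3+1) * ((p:ℤ)^(2*d) * (U2^2*W) + (p:ℤ)^(2*g+1) * U1^2) := by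
          rw [hE1, hE2, hE3, hW]; ring
        rw [hsum] at hdvd
        exact keyShape hp (show 2*c3 < 2*b by omega) hA3 hdvd
      · obtain ⟨h, rfl⟩ := Nat.exists_eq_add_of_lt hlt
        have hsum : Y1^2 + Y2^2*X2 + Y3^2*X3
            = (p:ℤ)^(2*c2+1) * (U2^2*W)
              + (p:ℤ)^(2*c2+1+1) * ((p:ℤ)^(2*h) * (U3^2*X3) + (p:ℤ)^(2*h+2*g+2) * U1^2) := by
          rw [hE1, hE2, hE3, hW]; ring
        rw [hsum] at hdvd
        exact keyShape hp (show 2*c2+1 < 2*b by omega) hA2 hdvd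


private lemma upper {n m : ℕ} (hn : 0 < n) (hnm : n = m * m) (hm2 : 2 ∣ m)
    (x : Fin 4 → ZMod n) : HasConsecWZS (nonzeroSquares n) x := by
  haveI : NeZero n := ⟨hn.ne'⟩
  obtain ⟨r, rfl⟩ := hm2
  have hr : r ≠ 0 := by rintro rfl; omega
  have hid : n = 4*(r*r) := by rw [hnm]; ring
  set vv : ℕ → ℕ := fun t => if h : t < 4 then (x ⟨t, h⟩).val else 0 with hvv
  have key : ∀ (a b : Fin 5), (a:ℕ) < (b:ℕ) →
      ((∑ t ∈ Finset.range (a:ℕ), vv t : ℕ) : ZMod 4) = ((∑ t ∈ Finset.range (b:ℕ), vv t : ℕ) : ZMod 4) →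
      ∃ i j : Fin 4, i ≤ j ∧ (4:ℕ) ∣ ∑ t ∈ Finset.Icc i j, (x t).val := by
    intro a b hab hP
    have hble : (b:ℕ) ≤ 4 := by omega
    have hsplit : ∑ t ∈ Finset.range (a:ℕ), vv t + ∑ t ∈ Finset.Ico (a:ℕ) (b:ℕ), vv t
        = ∑ t ∈ Finset.range (b:ℕ), vv t := Finset.sum_range_add_sum_Ico _ (le_of_lt hab)
    have hc : ((∑ t ∈ Finset.range (a:ℕ), vv t : ℕ) : ZMod 4)
        + ((∑ t ∈ Finset.Ico (a:ℕ) (b:ℕ), vv t : ℕ) : ZMod 4)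
        = ((∑ t ∈ Finset.range (b:ℕ), vv t : ℕ) : ZMod 4) := by
      rw [← Nat.cast_add, hsplit]
    have hS : ((∑ t ∈ Finset.Ico (a:ℕ) (b:ℕ), vv t : ℕ) : ZMod 4) = 0 := by
      linear_combination hc - hP
    have hdvd : (4:ℕ) ∣ ∑ t ∈ Finset.Ico (a:ℕ) (b:ℕ), vv t :=
      (ZMod.natCast_eq_zero_iff _ 4).mp hS
    have hgen : ∀ (i j : Fin 4), ∑ t ∈ Finset.Icc i j, (x t).val
        = ∑ u ∈ Finset.Icc (i:ℕ) (j:ℕ), vv u := by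
      intro i j
      rw [← Fin.map_valEmbedding_Icc, Finset.sum_map]
      refine Finset.sum_congr rfl ?_
      intro t _
      simp only [hvv, Fin.valEmbedding_apply, dif_pos t.isLt, Fin.eta]
    refine ⟨⟨(a:ℕ), by omega⟩, ⟨(b:ℕ)-1, by omega⟩, by simp [Fin.le_def]; omega, ?_⟩
    rw [hgen]
    have hIco : Finset.Icc ((⟨(a:ℕ), by omega⟩ : Fin 4) : ℕ) ((⟨(b:ℕ)-1, by omega⟩ : Fin 4) : ℕ)
        = Finset.Ico (a:ℕ) (b:ℕ) := by
      simp only [Fin.val_mk]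
      rw [← Finset.Ico_add_one_right_eq_Icc]
      congr 1
      omega
    rw [hIco]
    exact hdvd
  obtain ⟨a, b, hab, hP⟩ := Fintype.exists_ne_map_eq_of_card_lt
      (fun k : Fin 5 => ((∑ t ∈ Finset.range (k:ℕ), vv t : ℕ) : ZMod 4)) (by simp)
  have hij : ∃ i j : Fin 4, i ≤ j ∧ (4:ℕ) ∣ ∑ t ∈ Finset.Icc i j, (x t).val := by
    rcases (Fin.val_ne_iff.mpr hab).lt_or_gt with h | h
    · exact key a b h hP
    · exact key b a h hP.symm
  obtain ⟨i, j, hij, hdvd⟩ := hij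
  obtain ⟨s, hs⟩ := hdvd
  refine ⟨i, j, hij, fun _ => ((r^2 : ℕ) : ZMod n), ?_, ?_⟩
  · intro t _
    constructor
    · intro h0
      have := Nat.le_of_dvd (by positivity) ((ZMod.natCast_eq_zero_iff _ n).mp h0)
      have hrr : 1 ≤ r * r := Nat.one_le_iff_ne_zero.mpr (by positivity)
      have : r^2 = r*r := sq r
      omega
    · exact ⟨((r : ℕ) : ZMod n), by push_cast; ring⟩
  · have hxv : ∀ t, x t = (((x t).val : ℕ) : ZMod n) := fun t => (ZMod.natCast_rightInverse (x t)).symm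
    calc ∑ t ∈ Finset.Icc i j, ((r^2 : ℕ) : ZMod n) * x t
        = ((r^2 : ℕ) : ZMod n) * ∑ t ∈ Finset.Icc i j, x t := by rw [Finset.mul_sum]
      _ = ((r^2 : ℕ) : ZMod n) * ((∑ t ∈ Finset.Icc i j, (x t).val : ℕ) : ZMod n) := by
            rw [Nat.cast_sum]
            congr 1
            exact Finset.sum_congr rfl (fun t _ => hxv t)
      _ = ((r^2 * (4 * s) : ℕ) : ZMod n) := by rw [← hs]; push_cast; ring
      _ = ((n * s : ℕ) : ZMod n) := by congr 1; rw [hid]; ring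
      _ = 0 := by simp


private lemma lowerBad {n : ℕ} (hn : 0 < n) {α q : ℕ} (hα : 1 ≤ α) (hqodd : ¬ 2 ∣ q)
    (hq0 : q ≠ 0) (hnid : n = 4^α * q^2) :
    ∃ x : Fin 3 → ZMod n, ¬ HasWZSSubseq (nonzeroSquares n) x := by
  classical
  haveI : NeZero n := ⟨hn.ne'⟩
  obtain ⟨α', rfl⟩ : ∃ α', α = α' + 1 := ⟨α - 1, by omega⟩
  set α := α' + 1
  -- radical
  set ρ : ℕ := q.primeFactors.prod id with hρdef
  have hprimes : ∀ p ∈ q.primeFactors, p.Prime ∧ p ≠ 2 := by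
    intro p hp
    refine ⟨Nat.prime_of_mem_primeFactors hp, ?_⟩
    rintro rfl
    exact hqodd (Nat.dvd_of_mem_primeFactors hp)
  have hρdvd : ρ ∣ q := Nat.prod_primeFactors_dvd q
  have hρodd : ¬ 2 ∣ ρ := fun h => hqodd (h.trans hρdvd)
  have h2q : Nat.Coprime 2 q := (Nat.Prime.coprime_iff_not_dvd Nat.prime_two).mpr hqodd
  have h2ρ : Nat.Coprime 2 ρ := (Nat.Prime.coprime_iff_not_dvd Nat.prime_two).mpr hρodd
  have h4eq : (4:ℕ)^α = 2^(2*α) := by rw [pow_mul]; norm_num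
  have co1 : IsCoprime ((4^α : ℕ) : ℤ) ((ρ^2 : ℕ) : ℤ) := by
    rw [Nat.isCoprime_iff_coprime, h4eq]
    exact h2ρ.pow _ _
  have co2 : IsCoprime ((4^α : ℕ) : ℤ) ((ρ : ℕ) : ℤ) := by
    rw [Nat.isCoprime_iff_coprime, h4eq]
    exact Nat.Coprime.pow_left _ h2ρ
  have co3 : IsCoprime ((4:ℤ)^α) ((q:ℤ)^2) := by
    have : IsCoprime ((4^α : ℕ) : ℤ) ((q^2 : ℕ) : ℤ) := by
      rw [Nat.isCoprime_iff_coprime, h4eq]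
      exact h2q.pow _ _
    push_cast at this
    exact this
  obtain ⟨R, hR⟩ := pickNR q.primeFactors hprimes
  obtain ⟨X2, hX2a, hX2b⟩ := crtZ co1 1 (ρ:ℤ)
  obtain ⟨X3, hX3a, hX3b⟩ := crtZ co2 1 R
  push_cast at hX2a hX2b hX3a hX3b
  -- the bad sequence
  refine ⟨![1, ((X2:ℤ) : ZMod n), ((X3:ℤ) : ZMod n)], ?_⟩
  rintro ⟨I, ⟨i0, hi0⟩, w, hwA, hsum⟩
  set x : Fin 3 → ZMod n := ![1, ((X2:ℤ) : ZMod n), ((X3:ℤ) : ZMod n)] with hxdef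
  set X : Fin 3 → ℤ := ![1, X2, X3] with hXdef
  have hxX : ∀ i, x i = ((X i : ℤ) : ZMod n) := by
    intro i
    fin_cases i <;> simp [hxdef, hXdef]
  -- lift the weights
  have hZex : ∀ i : Fin 3, ∃ z : ℤ,
      (i ∈ I → (((z^2 : ℤ)) : ZMod n) = w i) ∧ (i ∉ I → z = 0) := by
    intro i
    by_cases hi : i ∈ I
    · obtain ⟨-, y, hy⟩ := hwA i hi
      refine ⟨((y.val : ℕ) : ℤ), fun _ => ?_, fun h => absurd hi h⟩
      push_cast
      rw [ZMod.natCast_rightInverse y, hy]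
    · exact ⟨0, fun h => absurd h hi, fun _ => rfl⟩
  choose Z hZmem hZnot using hZex
  set D : ℤ := Z 0^2 * X 0 + Z 1^2 * X 1 + Z 2^2 * X 2 with hDdef
  have hD0 : ((D : ℤ) : ZMod n) = 0 := by
    have hterm : ∀ i : Fin 3, ((Z i^2 * X i : ℤ) : ZMod n)
        = if i ∈ I then w i * x i else 0 := by
      intro i
      by_cases hi : i ∈ I
      · rw [if_pos hi, ← hZmem i hi, hxX i]
        push_cast
        ring
      · rw [if_neg hi, hZnot i hi]
        push_cast
        ring
    have h1 : ((D : ℤ) : ZMod n) = ∑ i : Fin 3, ((Z i^2 * X i : ℤ) : ZMod n) := by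
      rw [Fin.sum_univ_three, hDdef]
      push_cast
      ring
    rw [h1, Finset.sum_congr rfl (fun i _ => hterm i), Finset.sum_ite_mem,
      Finset.univ_inter]
    exact hsum
  have hnd : (n:ℤ) ∣ D := (ZMod.intCast_zmod_eq_zero_iff_dvd D n).mp hD0
  have hnZ : (n:ℤ) = (4:ℤ)^α * (q:ℤ)^2 := by rw [hnid]; push_cast; ring
  have h4n : ((4:ℤ)^α) ∣ (n:ℤ) := ⟨(q:ℤ)^2, hnZ⟩
  have h4D : (4:ℤ)^α ∣ D := h4n.trans hnd
  have h4sq : (4:ℤ)^α ∣ Z 0^2 + Z 1^2 + Z 2^2 := by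
    have hX0 : X 0 = 1 := rfl
    have hX1 : X 1 = X2 := rfl
    have hX2' : X 2 = X3 := rfl
    have hrw : Z 0^2 + Z 1^2 + Z 2^2
        = D - (Z 1^2 * (X2 - 1) + Z 2^2 * (X3 - 1)) := by
      rw [hDdef, hX0, hX1, hX2']
      ring
    rw [hrw]
    exact dvd_sub h4D (dvd_add (hX2a.mul_left _) (hX3a.mul_left _))
  have h4all : ∀ i : Fin 3, (4:ℤ)^α ∣ Z i^2 := by
    have hd := descent α' (Z 0) (Z 1) (Z 2) h4sq
    intro i
    fin_cases i
    exacts [hd.1, hd.2.1, hd.2.2]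
  -- weights are nonzero: no Z i (i ∈ I) divisible by q
  have hqnd : ∀ i ∈ I, ¬ (q:ℤ) ∣ Z i := by
    intro i hi hqd
    have hq2 : ((q:ℤ)^2) ∣ Z i^2 := pow_dvd_pow_of_dvd hqd 2
    have hnzi : (n:ℤ) ∣ Z i^2 := by
      rw [hnZ]
      exact co3.mul_dvd (h4all i) hq2
    have h0 : ((Z i^2 : ℤ) : ZMod n) = 0 := (ZMod.intCast_zmod_eq_zero_iff_dvd _ n).mpr hnzi
    exact (hwA i hi).1 ((hZmem i hi).symm.trans h0 |>.symm ▸ rfl)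
  have hfind : ∀ i ∈ I, ∃ p ∈ q.primeFactors,
      ¬ (p:ℕ)^(q.factorization p) ∣ (Z i).natAbs := by
    intro i hi
    have hqn : ¬ q ∣ (Z i).natAbs := by
      intro h
      exact hqnd i hi (Int.dvd_natAbs.mp (Int.natCast_dvd_natCast.mpr h))
    have hA0 : (Z i).natAbs ≠ 0 := fun h => hqn (h ▸ dvd_zero q)
    by_contra hc
    push_neg at hc
    apply hqn
    rw [← Nat.factorization_le_iff_dvd hq0 hA0, Finsupp.le_def]
    intro p
    by_cases hp : p ∈ q.primeFactors
    · exact (Nat.Prime.pow_dvd_iff_le_factorization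
        (Nat.prime_of_mem_primeFactors hp) hA0).mp (hc p hp)
    · have h0 : q.factorization p = 0 := by
        rw [← Nat.support_factorization] at hp
        exact Finsupp.notMem_support_iff.mp hp
      simp [h0]
  obtain ⟨p, hpmem, hpnd⟩ := hfind i0 hi0
  have hp : p.Prime := (hprimes p hpmem).1
  have hp2 : p ≠ 2 := (hprimes p hpmem).2
  haveI : Fact p.Prime := ⟨hp⟩
  set b : ℕ := q.factorization p with hbdef
  have hpq : (p:ℕ)^b ∣ q := Nat.ordProj_dvd q p
  have hpρ : (p:ℕ) ∣ ρ := Finset.dvd_prod_of_mem id hpmem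
  have hp2bn : ((p:ℤ)^(2*b)) ∣ (n:ℤ) := by
    have h1 : ((p:ℤ)^b) ∣ (q:ℤ) := by exact_mod_cast Int.natCast_dvd_natCast.mpr hpq
    have h2 : ((p:ℤ)^(2*b)) ∣ (q:ℤ)^2 := by
      rw [show 2*b = b*2 by ring, pow_mul]
      exact pow_dvd_pow_of_dvd h1 2
    rw [hnZ]
    exact h2.mul_left _
  set Y : Fin 3 → ℤ := fun i => if (p:ℕ)^b ∣ (Z i).natAbs then 0 else Z i with hYdef
  have hcastpow : ((p:ℤ)^(2*b)) = (((p:ℕ)^b : ℕ) : ℤ)^2 := by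
    push_cast
    rw [← pow_mul, mul_comm b 2]
  have hnat2int : ∀ (z : ℤ), (p:ℕ)^b ∣ z.natAbs → ((p:ℤ)^(2*b)) ∣ z^2 := by
    intro z hz
    have h1 : ((p:ℕ)^b)^2 ∣ z.natAbs^2 := pow_dvd_pow_of_dvd hz 2
    have h2 : ((((p:ℕ)^b)^2 : ℕ) : ℤ) ∣ ((z.natAbs^2 : ℕ) : ℤ) := Int.natCast_dvd_natCast.mpr h1
    have h3 : ((z.natAbs^2 : ℕ) : ℤ) = z^2 := by rw [Nat.cast_pow]; exact Int.natAbs_sq z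
    rw [h3] at h2
    rw [hcastpow]
    have h4 : ((((p:ℕ)^b)^2 : ℕ) : ℤ) = (((p:ℕ)^b : ℕ) : ℤ)^2 := by push_cast; ring
    rw [h4] at h2
    exact h2
  have hint2nat : ∀ (z : ℤ), ((p:ℤ)^(2*b)) ∣ z^2 → (p:ℕ)^b ∣ z.natAbs := by
    intro z h
    rw [hcastpow] at h
    have h3 : ((z.natAbs^2 : ℕ) : ℤ) = z^2 := by rw [Nat.cast_pow]; exact Int.natAbs_sq z
    rw [← h3] at h
    have h5 : ((((p:ℕ)^b)^2 : ℕ) : ℤ) ∣ ((z.natAbs^2 : ℕ) : ℤ) := by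
      have h6 : ((((p:ℕ)^b)^2 : ℕ) : ℤ) = (((p:ℕ)^b : ℕ) : ℤ)^2 := by push_cast; ring
      rw [h6]
      exact h
    exact (Nat.pow_dvd_pow_iff two_ne_zero).mp (Int.ofNat_dvd.mp h5)
  have hY : ∀ i : Fin 3, Y i = 0 ∨ ¬ ((p:ℤ)^(2*b) ∣ (Y i)^2) := by
    intro i
    by_cases hdv : (p:ℕ)^b ∣ (Z i).natAbs
    · left
      rw [hYdef]
      exact if_pos hdv
    · right
      have hYi : Y i = Z i := by rw [hYdef]; exact if_neg hdv
      rw [hYi]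
      intro hc
      exact hdv (hint2nat _ hc)
  have hX0 : X 0 = 1 := rfl
  have hX1 : X 1 = X2 := rfl
  have hX2'' : X 2 = X3 := rfl
  have hDp : (p:ℤ)^(2*b) ∣ (Y 0)^2 + (Y 1)^2 * X2 + (Y 2)^2 * X3 := by
    have hdiff : ∀ i : Fin 3, (p:ℤ)^(2*b) ∣ (Z i^2 - (Y i)^2) := by
      intro i
      by_cases hdv : (p:ℕ)^b ∣ (Z i).natAbs
      · have hYi : Y i = 0 := by rw [hYdef]; exact if_pos hdv
        rw [hYi]
        simpa using hnat2int _ hdv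
      · have hYi : Y i = Z i := by rw [hYdef]; exact if_neg hdv
        rw [hYi]
        simp
    have hrw : (Y 0)^2 + (Y 1)^2 * X2 + (Y 2)^2 * X3
        = D - ((Z 0^2 - (Y 0)^2) * 1 + (Z 1^2 - (Y 1)^2) * X2 + (Z 2^2 - (Y 2)^2) * X3) := by
      rw [hDdef, hX0, hX1, hX2'']
      ring
    rw [hrw]
    exact dvd_sub (hp2bn.trans hnd)
      (dvd_add (dvd_add ((hdiff 0).mul_right _) ((hdiff 1).mul_right _)) ((hdiff 2).mul_right _))
  have hρZ : (p:ℤ) ∣ (ρ:ℤ) := Int.natCast_dvd_natCast.mpr hpρ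
  have hX2p : (p:ℤ) ∣ X2 := by
    have h2 : (p:ℤ) ∣ X2 - ρ := (hρZ.trans (dvd_pow_self _ two_ne_zero)).trans
      (by rw [← (by push_cast; ring : (((ρ^2 : ℕ)):ℤ) = (ρ:ℤ)^2)]; exact hX2b)
    have : X2 = (X2 - ρ) + ρ := by ring
    rw [this]
    exact dvd_add h2 hρZ
  have hpZ : Prime (p:ℤ) := Nat.prime_iff_prime_int.mp hp
  have hpne : (p:ℤ) ≠ 0 := by exact_mod_cast hp.ne_zero
  have hX2p2 : ¬ ((p:ℤ)^2 ∣ X2) := by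
    set ρ' : ℕ := (q.primeFactors.erase p).prod id with hρ'def
    have hρfactN : ρ = p * ρ' := (Finset.mul_prod_erase q.primeFactors id hpmem).symm
    have hpρ'N : ¬ (p:ℕ) ∣ ρ' := by
      intro hd
      obtain ⟨a, ha, hpa⟩ := (Prime.dvd_finset_prod_iff hp.prime id).mp hd
      have haP : a.Prime := (hprimes a (Finset.mem_of_mem_erase ha)).1
      have : p = a := (Nat.prime_dvd_prime_iff_eq hp haP).mp hpa
      exact (Finset.ne_of_mem_erase ha) this.symm
    have hpρ' : ¬ (p:ℤ) ∣ (ρ':ℤ) := fun hd => hpρ'N (Int.natCast_dvd_natCast.mp hd)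
    intro hc
    obtain ⟨k, hk⟩ := hX2b
    have hX2eq : X2 = (p:ℤ) * ((ρ':ℤ) * (1 + (ρ:ℤ)*k)) := by
      have h5 : X2 = (ρ:ℤ) + (ρ:ℤ)^2 * k := by push_cast at hk; linear_combination hk
      rw [h5]
      have h6 : (ρ:ℤ) = (p:ℤ) * (ρ':ℤ) := by exact_mod_cast congrArg (Nat.cast : ℕ → ℤ) hρfactN
      rw [h6]
      ring
    rw [hX2eq, pow_two] at hc
    obtain ⟨e, he⟩ := hc
    have hpM : (p:ℤ) ∣ (ρ':ℤ) * (1 + (ρ:ℤ)*k) :=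
      ⟨e, mul_left_cancel₀ hpne (by linear_combination he)⟩
    rcases hpZ.dvd_mul.mp hpM with h | h
    · exact hpρ' h
    · have h7 : (p:ℤ) ∣ 1 := by
        have := dvd_sub h (hρZ.mul_right k)
        simpa using this
      have h8 : (p:ℕ) ∣ 1 := by exact_mod_cast h7
      exact hp.ne_one (Nat.dvd_one.mp h8)
  have hX3R : ¬ IsSquare (-(X3 : ZMod p)) := by
    have h1 : (p:ℤ) ∣ X3 - R := hρZ.trans hX3b
    have h2 : ((X3 - R : ℤ) : ZMod p) = 0 := (ZMod.intCast_zmod_eq_zero_iff_dvd _ p).mpr h1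
    push_cast at h2
    have h3 : ((X3:ℤ) : ZMod p) = ((R:ℤ) : ZMod p) := by linear_combination h2
    rw [h3]
    exact hR p hpmem
  have hneY : ¬ (Y 0 = 0 ∧ Y 1 = 0 ∧ Y 2 = 0) := by
    rintro ⟨h0, h1, h2⟩
    have hYi0 : Y i0 = 0 := by fin_cases i0 <;> assumption
    have hYi0' : Y i0 = Z i0 := by rw [hYdef]; exact if_neg hpnd
    have hZi0 : Z i0 ≠ 0 := by
      intro hz
      exact hpnd (by rw [hz]; simp)
    exact hZi0 (hYi0'.symm.trans hYi0)
  exact localLemma p hp hp2 b X2 X3 hX2p hX2p2 hX3R (Y 0) (Y 1) (Y 2)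
    (hY 0) (hY 1) (hY 2) hneY hDp


private lemma consecToSub {n k : ℕ} {A : Set (ZMod n)} {x : Fin k → ZMod n}
    (h : HasConsecWZS A x) : HasWZSSubseq A x := by
  obtain ⟨i, j, hij, w, hw, hs⟩ := h
  exact ⟨Finset.Icc i j, ⟨i, Finset.mem_Icc.mpr ⟨le_refl i, hij⟩⟩, w, hw, hs⟩

theorem stmt14 (n : ℕ) (hn : 0 < n) (heven : 2 ∣ n) (hsq : IsSquare n) :
    IsLeast {k | DConst n (nonzeroSquares n) k} 4 ∧
    IsLeast {k | CConst n (nonzeroSquares n) k} 4 := by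
  classical
  obtain ⟨m, hm⟩ := hsq
  have hm2 : 2 ∣ m := ((Nat.Prime.dvd_mul Nat.prime_two).mp (hm ▸ heven)).elim id id
  have hm0 : m ≠ 0 := by rintro rfl; omega
  obtain ⟨α, q, hq2, hmaq⟩ := Nat.exists_eq_pow_mul_and_not_dvd hm0 2 (by norm_num)
  have hα : 1 ≤ α := by
    rcases Nat.eq_zero_or_pos α with rfl | h
    · rw [pow_zero, one_mul] at hmaq
      exact absurd (hmaq ▸ hm2) hq2
    · exact h
  have hq0 : q ≠ 0 := by rintro rfl; rw [mul_zero] at hmaq; exact hm0 hmaq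
  have hnid : n = 4^α * q^2 := by
    rw [hm, hmaq, show (4:ℕ)^α = 2^(2*α) by rw [pow_mul]; norm_num]
    ring
  have hCC : CConst n (nonzeroSquares n) 4 := ⟨by norm_num, fun x => upper hn hm hm2 x⟩
  have hDC : DConst n (nonzeroSquares n) 4 :=
    ⟨by norm_num, fun x => consecToSub (upper hn hm hm2 x)⟩
  obtain ⟨xb, hxb⟩ := lowerBad hn hα hq2 hq0 hnid
  have hlow : ∀ k, DConst n (nonzeroSquares n) k → 4 ≤ k := by
    intro k hk
    obtain ⟨hk0, hkall⟩ := hk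
    by_contra hlt
    push_neg at hlt
    have hk3 : k ≤ 3 := by omega
    obtain ⟨I', hI', w', hw', hs'⟩ := hkall (fun t => xb (Fin.castLE hk3 t))
    apply hxb
    refine ⟨I'.map (Fin.castLEEmb hk3), hI'.map,
      (fun i => if h : (i:ℕ) < k then w' ⟨(i:ℕ), h⟩ else 1), ?_, ?_⟩
    · intro i hi
      obtain ⟨i', hi', rfl⟩ := Finset.mem_map.mp hi
      have hlt' : ((Fin.castLEEmb hk3 i' : Fin 3) : ℕ) < k := i'.isLt
      simp only [dif_pos hlt']
      have heq : (⟨((Fin.castLEEmb hk3 i' : Fin 3) : ℕ), hlt'⟩ : Fin k) = i' := by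
        ext
        simp [Fin.castLEEmb]
      rw [heq]
      exact hw' i' hi'
    · rw [Finset.sum_map]
      refine (Finset.sum_congr rfl ?_).trans hs'
      intro i' hi'
      have hlt' : ((Fin.castLEEmb hk3 i' : Fin 3) : ℕ) < k := i'.isLt
      simp only [dif_pos hlt']
      have heq : (⟨((Fin.castLEEmb hk3 i' : Fin 3) : ℕ), hlt'⟩ : Fin k) = i' := by
        ext
        simp [Fin.castLEEmb]
      rw [heq]
      rfl
  refine ⟨⟨hDC, hlow⟩, ⟨hCC, ?_⟩⟩
  intro k hk
  exact hlow k ⟨hk.1, fun x => consecToSub (hk.2 x)⟩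
end

section
/- Let p be an odd prime, r ≥ 1, and suppose S = (v_1, v_2) is a sequence of units in Z/p^rZ such that the image of S in Z/pZ is not a Q_p-weighted zero-sum sequence. Then S has no S(p^r)*-weighted zero-sum subsequence. -/
/-- If `p ∣ Y₀` then also `p ∣ Y₁`, and dividing both by `p` lowers the exponent by two;
the descent stops at some `Y₀` prime to `p`, whose residues give the solution mod `p`. -/
theorem exists_sq_combination_eq_zero_of_pow_dvd {p : ℕ} [Fact p.Prime] {V₀ V₁ : ℕ}
    (hV₀ : (V₀ : ZMod p) ≠ 0) (hV₁ : (V₁ : ZMod p) ≠ 0) {r Y₀ Y₁ : ℕ}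
    (hY₀ : ¬ p ^ r ∣ Y₀ ^ 2) (hsum : p ^ r ∣ Y₀ ^ 2 * V₀ + Y₁ ^ 2 * V₁) :
    ∃ c₀ c₁ : ZMod p, c₀ ≠ 0 ∧ c₁ ≠ 0 ∧ c₀ ^ 2 * V₀ + c₁ ^ 2 * V₁ = 0 := by
  induction r using Nat.strong_induction_on generalizing Y₀ Y₁ with
  | _ r ih =>
    have hr : r ≠ 0 := by rintro rfl; simp at hY₀
    have hsum_mod_p : (Y₀ : ZMod p) ^ 2 * V₀ + (Y₁ : ZMod p) ^ 2 * V₁ = 0 := by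
      exact_mod_cast (ZMod.natCast_eq_zero_iff _ p).mpr ((dvd_pow_self p hr).trans hsum)
    by_cases hY₀p : (Y₀ : ZMod p) = 0
    · have hY₁p : (Y₁ : ZMod p) = 0 := by
        simpa [hY₀p, hV₁] using hsum_mod_p
      obtain ⟨Z₀, rfl⟩ := (ZMod.natCast_eq_zero_iff _ p).mp hY₀p
      obtain ⟨Z₁, rfl⟩ := (ZMod.natCast_eq_zero_iff _ p).mp hY₁p
      obtain ⟨s, rfl⟩ : ∃ s, r = s + 2 := by
        refine ⟨r - 2, (Nat.sub_add_cancel (not_lt.mp fun hr2 => hY₀ ?_)).symm⟩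
        exact (pow_dvd_pow p hr2.le).trans ⟨Z₀ ^ 2, by ring⟩
      have hpp : 0 < p ^ 2 := pow_pos (Fact.out : p.Prime).pos 2
      refine ih s (by omega) (Y₀ := Z₀) (Y₁ := Z₁) (fun h => hY₀ ?_) ?_
      · simpa [pow_add, mul_pow, mul_comm] using mul_dvd_mul_left (p ^ 2) h
      · rw [← Nat.mul_dvd_mul_iff_left hpp, ← pow_add, add_comm 2]
        convert hsum using 1; ring
    · refine ⟨Y₀, Y₁, hY₀p, fun hY₁p => ?_, hsum_mod_p⟩
      simp [hY₁p, hY₀p, hV₀] at hsum_mod_p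

theorem exists_sq_combination_castHom_eq_zero {p r : ℕ} [Fact p.Prime] (hdp : p ∣ p ^ r)
    {v₀ v₁ y₀ y₁ : ZMod (p ^ r)} (hv₀ : IsUnit v₀) (hv₁ : IsUnit v₁) (hy₀ : y₀ ^ 2 ≠ 0)
    (hsum : y₀ ^ 2 * v₀ + y₁ ^ 2 * v₁ = 0) :
    ∃ c₀ c₁ : ZMod p, c₀ ≠ 0 ∧ c₁ ≠ 0 ∧
      c₀ ^ 2 * ZMod.castHom hdp (ZMod p) v₀ + c₁ ^ 2 * ZMod.castHom hdp (ZMod p) v₁ = 0 := by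
  have : NeZero (p ^ r) := ⟨pow_ne_zero r (Fact.out : p.Prime).ne_zero⟩
  have hcast : ∀ v : ZMod (p ^ r), ZMod.castHom hdp (ZMod p) v = (v.val : ZMod p) := fun v => by
    rw [ZMod.castHom_apply, ZMod.natCast_val]
  have hunit : ∀ v : ZMod (p ^ r), IsUnit v → (v.val : ZMod p) ≠ 0 := fun v hv =>
    hcast v ▸ (hv.map (ZMod.castHom hdp (ZMod p))).ne_zero
  simp only [hcast]
  refine exists_sq_combination_eq_zero_of_pow_dvd (hunit v₀ hv₀) (hunit v₁ hv₁)
    (r := r) (Y₀ := y₀.val) (Y₁ := y₁.val) (fun h => hy₀ ?_) ?_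
  · simpa using (ZMod.natCast_eq_zero_iff _ _).mpr h
  · rw [← ZMod.natCast_eq_zero_iff]; simpa using hsum

theorem stmt15_general (p : ℕ) (hp : p.Prime) (r : ℕ)
    (v : Fin 2 → ZMod (p ^ r)) (hv : ∀ i, IsUnit (v i))
    (hdp : p ∣ p ^ r)
    (hnz : ¬ IsWeightedZeroSum (unitSquares p)
      (fun i => ZMod.castHom hdp (ZMod p) (v i))) :
    ¬ HasWZSSubseq (nonzeroSquares (p ^ r)) v := by
  have : Fact p.Prime := ⟨hp⟩
  rintro ⟨I, hI, w, hw, hsum⟩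
  have hterm : ∀ i ∈ I, w i * v i ≠ 0 := fun i hi => by
    rw [Ne, (hv i).mul_left_eq_zero]; exact (hw i hi).1
  obtain rfl | rfl | rfl := (by decide : ∀ J : Finset (Fin 2), J.Nonempty →
    J = {0} ∨ J = {1} ∨ J = {0, 1}) I hI
  · exact hterm 0 (by simp) (by simpa using hsum)
  · exact hterm 1 (by simp) (by simpa using hsum)
  · obtain ⟨hw₀, y₀, hy₀⟩ := hw 0 (by simp)
    obtain ⟨-, y₁, hy₁⟩ := hw 1 (by simp)
    rw [Finset.sum_pair (by decide), ← hy₀, ← hy₁] at hsum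
    obtain ⟨c₀, c₁, hc₀, hc₁, hc⟩ :=
      exists_sq_combination_castHom_eq_zero hdp (hv 0) (hv 1) (hy₀ ▸ hw₀) hsum
    refine hnz ⟨two_pos, ![c₀ ^ 2, c₁ ^ 2], fun i => ?_, by simpa [Fin.sum_univ_two] using hc⟩
    fin_cases i
    exacts [⟨Units.mk0 c₀ hc₀, rfl⟩, ⟨Units.mk0 c₁ hc₁, rfl⟩]

theorem stmt15 (p : ℕ) (hp : p.Prime) (hodd : Odd p) (r : ℕ) (hr : 1 ≤ r)
    (v : Fin 2 → ZMod (p ^ r)) (hv : ∀ i, IsUnit (v i))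
    (hdp : p ∣ p ^ r)
    (hnz : ¬ IsWeightedZeroSum (unitSquares p)
      (fun i => ZMod.castHom hdp (ZMod p) (v i))) :
    ¬ HasWZSSubseq (nonzeroSquares (p ^ r)) v :=
  stmt15_general p hp r v hv hdp hnz
end

section
/- Let p be a prime, r ≥ 2 even, and (w_1, w_2) a sequence of units in Z/p^rZ such that the image of (w_1, w_2) in Z/pZ is not a Q_p-weighted zero-sum sequence. Let u be a unit in Z/p^rZ and consider the sequence S = (u·w_1, u·w_2, p·w_1, p·w_2) in Z/p^rZ. Then S has no S(p^r)*-weighted zero-sum subsequence. -/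
section Aux

variable {p r : ℕ}

lemma exists_rep (hp : p.Prime) {x : ZMod (p ^ r)} (hx : x ≠ 0) :
    ∃ a : ℕ, a < r ∧ ∃ c : ZMod (p ^ r), IsUnit c ∧ x = (p : ZMod (p ^ r)) ^ a * c := by
  haveI : NeZero (p ^ r) := ⟨pow_ne_zero _ hp.pos.ne'⟩
  have hn0 : x.val ≠ 0 := fun h => hx ((ZMod.val_eq_zero x).mp h)
  set n := x.val with hn
  set a := n.factorization p with ha
  set m := n / p ^ a with hm
  have hmp : ¬ p ∣ m := Nat.not_dvd_ordCompl hp hn0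
  have hnm : p ^ a * m = n := Nat.ordProj_mul_ordCompl_eq_self n p
  have hcop : Nat.Coprime m (p ^ r) :=
    (Nat.coprime_comm.mp (hp.coprime_iff_not_dvd.mpr hmp)).pow_right r
  have hmu : IsUnit (m : ZMod (p ^ r)) := (ZMod.isUnit_iff_coprime m (p ^ r)).mpr hcop
  have hxr : x = (p : ZMod (p ^ r)) ^ a * (m : ZMod (p ^ r)) := by
    have h1 : ((p ^ a * m : ℕ) : ZMod (p ^ r)) = x := by rw [hnm]; exact ZMod.natCast_zmod_val x
    push_cast at h1
    exact h1.symm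
  have har : a < r := by
    have h1 : p ^ a ≤ n := Nat.ordProj_le p hn0
    have h2 : n < p ^ r := ZMod.val_lt x
    exact (Nat.pow_lt_pow_iff_right hp.one_lt).mp (lt_of_le_of_lt h1 h2)
  exact ⟨a, har, m, hmu, hxr⟩

lemma p_pow_zero (hp : p.Prime) {e : ℕ} (he : r ≤ e) : (p : ZMod (p ^ r)) ^ e = 0 := by
  have h1 : ((p ^ e : ℕ) : ZMod (p ^ r)) = 0 :=
    (ZMod.natCast_eq_zero_iff _ _).mpr (pow_dvd_pow p he)
  push_cast at h1
  exact h1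

lemma exists_sq_rep (hp : p.Prime) (hre : Even r) {s : ZMod (p ^ r)}
    (hs : s ∈ nonzeroSquares (p ^ r)) :
    ∃ a : ℕ, 2 * a + 2 ≤ r ∧ ∃ c : ZMod (p ^ r), IsUnit c ∧
      s = (p : ZMod (p ^ r)) ^ (2 * a) * c ^ 2 := by
  obtain ⟨hs0, y, hy⟩ := hs
  have hy0 : y ≠ 0 := by rintro rfl; rw [← hy] at hs0; simp at hs0
  obtain ⟨a, har, c, hc, hyc⟩ := exists_rep hp hy0
  have hsy : s = (p : ZMod (p ^ r)) ^ (2 * a) * c ^ 2 := by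
    rw [← hy, hyc]; ring
  have h2a : 2 * a < r := by
    by_contra h
    exact hs0 (by rw [hsy, p_pow_zero hp (le_of_not_gt h), zero_mul])
  obtain ⟨k, hk⟩ := hre
  exact ⟨a, by omega, c, hc, hsy⟩

lemma isUnit_add_p_mul (hp : p.Prime) {c : ZMod (p ^ r)} (z : ZMod (p ^ r)) (hc : IsUnit c) :
    IsUnit (c + (p : ZMod (p ^ r)) * z) := by
  have hnil : IsNilpotent ((p : ZMod (p ^ r)) * z) := by
    refine ⟨r, ?_⟩
    rw [mul_pow, p_pow_zero hp le_rfl, zero_mul]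
  exact hnil.isUnit_add_left_of_commute hc (mul_comm _ _)

lemma p_pow_mul_unit_ne_zero (hp : p.Prime) {e : ℕ} (he : e < r) {c : ZMod (p ^ r)}
    (hc : IsUnit c) : (p : ZMod (p ^ r)) ^ e * c ≠ 0 := by
  haveI : NeZero (p ^ r) := ⟨pow_ne_zero _ hp.pos.ne'⟩
  intro h
  have hpe : (p : ZMod (p ^ r)) ^ e = 0 := by
    have h2 := congrArg (· * (↑hc.unit⁻¹ : ZMod (p ^ r))) h
    simpa [mul_assoc, IsUnit.mul_val_inv] using h2
  have h3 : ((p ^ e : ℕ) : ZMod (p ^ r)) = 0 := by push_cast; exact hpe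
  have hdvd := (ZMod.natCast_eq_zero_iff _ _).mp h3
  exact absurd ((Nat.pow_dvd_pow_iff_le_right hp.one_lt).mp hdvd) (not_le.mpr he)

lemma mixed_ne_lt (hp : p.Prime) {e f : ℕ} (he : e < r) (hef : e < f)
    {c d : ZMod (p ^ r)} (hc : IsUnit c) :
    (p : ZMod (p ^ r)) ^ e * c + (p : ZMod (p ^ r)) ^ f * d ≠ 0 := by
  obtain ⟨k, rfl⟩ : ∃ k, f = e + 1 + k := ⟨f - e - 1, by omega⟩
  have heq : (p : ZMod (p ^ r)) ^ e * c + (p : ZMod (p ^ r)) ^ (e + 1 + k) * d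
      = (p : ZMod (p ^ r)) ^ e * (c + (p : ZMod (p ^ r)) * ((p : ZMod (p ^ r)) ^ k * d)) := by
    rw [pow_add, pow_add, pow_one]; ring
  rw [heq]
  exact p_pow_mul_unit_ne_zero hp he (isUnit_add_p_mul hp _ hc)

lemma mixed_ne (hp : p.Prime) {a b : ℕ} (ha : 2 * a + 2 ≤ r) (hb : 2 * b + 2 ≤ r)
    {c d : ZMod (p ^ r)} (hc : IsUnit c) (hd : IsUnit d) :
    (p : ZMod (p ^ r)) ^ (2 * a) * c + (p : ZMod (p ^ r)) ^ (2 * b + 1) * d ≠ 0 := by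
  rcases Nat.lt_or_ge (2 * a) (2 * b + 1) with h | h
  · exact mixed_ne_lt hp (by omega) h hc
  · rw [add_comm]
    exact mixed_ne_lt hp (by omega) (by omega) hd

lemma evenPart_pair_lt (hp : p.Prime) {a0 a1 : ℕ} (h01 : a0 < a1)
    {c0 c1 v0 v1 : ZMod (p ^ r)} (hc0 : IsUnit c0) (hv0 : IsUnit v0) :
    ∃ c : ZMod (p ^ r), IsUnit c ∧
      (p : ZMod (p ^ r)) ^ (2 * a0) * c0 ^ 2 * v0 + (p : ZMod (p ^ r)) ^ (2 * a1) * c1 ^ 2 * v1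
        = (p : ZMod (p ^ r)) ^ (2 * a0) * c := by
  refine ⟨c0 ^ 2 * v0 + (p : ZMod (p ^ r)) * ((p : ZMod (p ^ r)) ^ (2 * (a1 - a0) - 1) * (c1 ^ 2 * v1)),
    isUnit_add_p_mul hp _ ((hc0.pow 2).mul hv0), ?_⟩
  have h2 : 2 * a1 = 2 * a0 + (1 + (2 * (a1 - a0) - 1)) := by omega
  rw [h2, pow_add, pow_add, pow_one]; ring

lemma evenPart_single (hp : p.Prime) (hre : Even r) {s v : ZMod (p ^ r)}
    (hs : s ∈ nonzeroSquares (p ^ r)) (hv : IsUnit v) :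
    ∃ a, 2 * a + 2 ≤ r ∧ ∃ c : ZMod (p ^ r), IsUnit c ∧
      s * v = (p : ZMod (p ^ r)) ^ (2 * a) * c := by
  obtain ⟨a, ha, c, hc, rfl⟩ := exists_sq_rep hp hre hs
  exact ⟨a, ha, c ^ 2 * v, (hc.pow 2).mul hv, by ring⟩

lemma evenPart_pair (hp : p.Prime) (hre : Even r) {v0 v1 s0 s1 : ZMod (p ^ r)}
    (hQ : ∀ c0 c1 : ZMod (p ^ r), IsUnit c0 → IsUnit c1 →
      IsUnit (c0 ^ 2 * v0 + c1 ^ 2 * v1))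
    (hv0 : IsUnit v0) (hv1 : IsUnit v1)
    (hs0 : s0 ∈ nonzeroSquares (p ^ r)) (hs1 : s1 ∈ nonzeroSquares (p ^ r)) :
    ∃ a, 2 * a + 2 ≤ r ∧ ∃ c : ZMod (p ^ r), IsUnit c ∧
      s0 * v0 + s1 * v1 = (p : ZMod (p ^ r)) ^ (2 * a) * c := by
  obtain ⟨a0, ha0, c0, hc0, rfl⟩ := exists_sq_rep hp hre hs0
  obtain ⟨a1, ha1, c1, hc1, rfl⟩ := exists_sq_rep hp hre hs1
  rcases Nat.lt_trichotomy a0 a1 with h | h | h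
  · obtain ⟨c, hc, hceq⟩ := evenPart_pair_lt (c1 := c1) (v1 := v1) hp h hc0 hv0
    exact ⟨a0, ha0, c, hc, hceq⟩
  · subst h
    exact ⟨a0, ha0, c0 ^ 2 * v0 + c1 ^ 2 * v1, hQ c0 c1 hc0 hc1, by ring⟩
  · obtain ⟨c, hc, hceq⟩ := evenPart_pair_lt (c1 := c0) (v1 := v0) hp h hc1 hv1
    exact ⟨a1, ha1, c, hc, by rw [add_comm]; exact hceq⟩

lemma isUnit_of_cast_ne_zero (hp : p.Prime) (hdp : p ∣ p ^ r) {x : ZMod (p ^ r)}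
    (hx : ZMod.castHom hdp (ZMod p) x ≠ 0) : IsUnit x := by
  haveI : NeZero (p ^ r) := ⟨pow_ne_zero _ hp.pos.ne'⟩
  haveI : NeZero p := ⟨hp.pos.ne'⟩
  by_contra hnu
  have hx' : ¬ Nat.Coprime x.val (p ^ r) := fun h => hnu (by
    have h2 := (ZMod.isUnit_iff_coprime x.val (p ^ r)).mpr h
    rwa [ZMod.natCast_zmod_val] at h2)
  have hpd : p ∣ x.val := by
    by_contra hpd
    exact hx' (((hp.coprime_iff_not_dvd.mpr hpd).symm).pow_right r)
  apply hx
  rw [ZMod.castHom_apply, ← ZMod.natCast_val]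
  exact (ZMod.natCast_eq_zero_iff _ _).mpr hpd

end Aux

theorem stmt17 (p : ℕ) (hp : p.Prime) (r : ℕ) (hr : 2 ≤ r) (hre : Even r)
    (w : Fin 2 → ZMod (p ^ r)) (hw : ∀ i, IsUnit (w i))
    (hdp : p ∣ p ^ r)
    (hnz : ¬ IsWeightedZeroSum (unitSquares p)
      (fun i => ZMod.castHom hdp (ZMod p) (w i)))
    (u : ZMod (p ^ r)) (hu : IsUnit u) :
    ¬ HasWZSSubseq (nonzeroSquares (p ^ r))
      ![u * w 0, u * w 1, (p : ZMod (p ^ r)) * w 0, (p : ZMod (p ^ r)) * w 1] := by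
  haveI : NeZero (p ^ r) := ⟨pow_ne_zero _ hp.pos.ne'⟩
  rintro ⟨I, hIne, wt, hwt, hsum⟩
  -- the key unit-sum property coming from `hnz`
  have hQ : ∀ c0 c1 : ZMod (p ^ r), IsUnit c0 → IsUnit c1 →
      IsUnit (c0 ^ 2 * w 0 + c1 ^ 2 * w 1) := by
    intro c0 c1 hc0 hc1
    apply isUnit_of_cast_ne_zero hp hdp
    intro hc
    apply hnz
    refine ⟨two_pos, ![(ZMod.castHom hdp (ZMod p) c0) ^ 2,
      (ZMod.castHom hdp (ZMod p) c1) ^ 2], ?_, ?_⟩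
    · intro i
      fin_cases i
      · exact ⟨(hc0.map (ZMod.castHom hdp (ZMod p))).unit, by
          rw [IsUnit.unit_spec]; rfl⟩
      · exact ⟨(hc1.map (ZMod.castHom hdp (ZMod p))).unit, by
          rw [IsUnit.unit_spec]; rfl⟩
    · rw [map_add, map_mul, map_mul, map_pow, map_pow] at hc
      simpa [Fin.sum_univ_two] using hc
  have hQu : ∀ c0 c1 : ZMod (p ^ r), IsUnit c0 → IsUnit c1 →
      IsUnit (c0 ^ 2 * (u * w 0) + c1 ^ 2 * (u * w 1)) := by
    intro c0 c1 hc0 hc1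
    have h2 : c0 ^ 2 * (u * w 0) + c1 ^ 2 * (u * w 1)
        = u * (c0 ^ 2 * w 0 + c1 ^ 2 * w 1) := by ring
    rw [h2]
    exact hu.mul (hQ c0 c1 hc0 hc1)
  -- rewrite the sum
  have hsum2 : (if (0 : Fin 4) ∈ I then wt 0 * (u * w 0) else 0)
      + (if (1 : Fin 4) ∈ I then wt 1 * (u * w 1) else 0)
      + (if (2 : Fin 4) ∈ I then wt 2 * ((p : ZMod (p ^ r)) * w 0) else 0)
      + (if (3 : Fin 4) ∈ I then wt 3 * ((p : ZMod (p ^ r)) * w 1) else 0) = 0 := by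
    have h1 : ∑ i : Fin 4,
        (if i ∈ I then wt i * (![u * w 0, u * w 1, (p : ZMod (p ^ r)) * w 0,
          (p : ZMod (p ^ r)) * w 1]) i else 0) = 0 := by
      rw [Finset.sum_ite_mem, Finset.univ_inter]; exact hsum
    rw [Fin.sum_univ_four] at h1
    exact h1
  set A := (if (0 : Fin 4) ∈ I then wt 0 * (u * w 0) else 0)
      + (if (1 : Fin 4) ∈ I then wt 1 * (u * w 1) else 0) with hAdef
  set B := (if (2 : Fin 4) ∈ I then wt 2 * ((p : ZMod (p ^ r)) * w 0) else 0)
      + (if (3 : Fin 4) ∈ I then wt 3 * ((p : ZMod (p ^ r)) * w 1) else 0) with hBdef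
  have hAB : A + B = 0 := by rw [hAdef, hBdef]; linear_combination hsum2
  have hAspec : (0 : Fin 4) ∈ I ∨ (1 : Fin 4) ∈ I →
      ∃ a, 2 * a + 2 ≤ r ∧ ∃ c : ZMod (p ^ r), IsUnit c ∧
        A = (p : ZMod (p ^ r)) ^ (2 * a) * c := by
    intro h01
    by_cases h0 : (0 : Fin 4) ∈ I <;> by_cases h1 : (1 : Fin 4) ∈ I
    · rw [hAdef, if_pos h0, if_pos h1]
      exact evenPart_pair hp hre hQu (hu.mul (hw 0)) (hu.mul (hw 1)) (hwt 0 h0) (hwt 1 h1)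
    · rw [hAdef, if_pos h0, if_neg h1, add_zero]
      exact evenPart_single hp hre (hwt 0 h0) (hu.mul (hw 0))
    · rw [hAdef, if_neg h0, if_pos h1, zero_add]
      exact evenPart_single hp hre (hwt 1 h1) (hu.mul (hw 1))
    · tauto
  have hBspec : (2 : Fin 4) ∈ I ∨ (3 : Fin 4) ∈ I →
      ∃ b, 2 * b + 2 ≤ r ∧ ∃ d : ZMod (p ^ r), IsUnit d ∧
        B = (p : ZMod (p ^ r)) ^ (2 * b + 1) * d := by
    intro h23
    by_cases h2 : (2 : Fin 4) ∈ I <;> by_cases h3 : (3 : Fin 4) ∈ I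
    · rw [hBdef, if_pos h2, if_pos h3]
      obtain ⟨b, hb, d, hd, hEq⟩ :=
        evenPart_pair hp hre hQ (hw 0) (hw 1) (hwt 2 h2) (hwt 3 h3)
      refine ⟨b, hb, d, hd, ?_⟩
      have h4 : wt 2 * ((p : ZMod (p ^ r)) * w 0) + wt 3 * ((p : ZMod (p ^ r)) * w 1)
          = (p : ZMod (p ^ r)) * (wt 2 * w 0 + wt 3 * w 1) := by ring
      rw [h4, hEq, pow_succ]; ring
    · rw [hBdef, if_pos h2, if_neg h3, add_zero]
      obtain ⟨b, hb, d, hd, hEq⟩ := evenPart_single hp hre (hwt 2 h2) (hw 0)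
      refine ⟨b, hb, d, hd, ?_⟩
      have h4 : wt 2 * ((p : ZMod (p ^ r)) * w 0)
          = (p : ZMod (p ^ r)) * (wt 2 * w 0) := by ring
      rw [h4, hEq, pow_succ]; ring
    · rw [hBdef, if_neg h2, if_pos h3, zero_add]
      obtain ⟨b, hb, d, hd, hEq⟩ := evenPart_single hp hre (hwt 3 h3) (hw 1)
      refine ⟨b, hb, d, hd, ?_⟩
      have h4 : wt 3 * ((p : ZMod (p ^ r)) * w 1)
          = (p : ZMod (p ^ r)) * (wt 3 * w 1) := by ring
      rw [h4, hEq, pow_succ]; ring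
    · tauto
  by_cases hE : (0 : Fin 4) ∈ I ∨ (1 : Fin 4) ∈ I
    <;> by_cases hO : (2 : Fin 4) ∈ I ∨ (3 : Fin 4) ∈ I
  · obtain ⟨a, ha, c, hc, hAeq⟩ := hAspec hE
    obtain ⟨b, hb, d, hd, hBeq⟩ := hBspec hO
    rw [hAeq, hBeq] at hAB
    exact mixed_ne hp ha hb hc hd hAB
  · obtain ⟨a, ha, c, hc, hAeq⟩ := hAspec hE
    push_neg at hO
    have hB0 : B = 0 := by rw [hBdef, if_neg hO.1, if_neg hO.2, add_zero]
    rw [hAeq, hB0, add_zero] at hAB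
    exact p_pow_mul_unit_ne_zero hp (by omega) hc hAB
  · obtain ⟨b, hb, d, hd, hBeq⟩ := hBspec hO
    push_neg at hE
    have hA0 : A = 0 := by rw [hAdef, if_neg hE.1, if_neg hE.2, add_zero]
    rw [hBeq, hA0, zero_add] at hAB
    exact p_pow_mul_unit_ne_zero hp (by omega) hd hAB
  · obtain ⟨i, hi⟩ := hIne
    push_neg at hE hO
    fin_cases i <;> tauto
end

section
/- Let n be an odd square. Then D_{S(n)*} = 5. -/
/-!
Upper bound: pick an odd prime `p ∣ n` with `p ^ e ∥ n`. By the Chinese remainder theorem it is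
enough to find the zero sum in `ZMod (p ^ e)`, using weights that vanish modulo `n / p ^ e`. A
nonzero element there is `p ^ v * u` with `u` a unit; among five of them three have valuations of
the same parity, so after multiplying by even powers of `p` they share one valuation. The ternary
form `u₁ x² + u₂ y² + u₃ z²` has a zero modulo `p` with `z ≠ 0`, and Hensel's lemma lifts it.

Lower bound: write `n = m²`, choose `N` a non-residue modulo every prime `p ∣ m` and
`P ≡ p mod p ^ (2 vₚ(m))`, and take the sequence `1, -N, P, -NP`. A square-weighted zero sum
`a² - N b² + p (c² - N d²) ≡ 0 mod p ^ (2 vₚ(m))` forces `p ^ vₚ(m)` to divide `a, b, c, d`,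
because `x² - N y²` is anisotropic modulo `p`; hence every weight vanishes modulo `m² = n`.
-/

open Finset Function

section SquareWeightedZeroSum

variable {R ι κ : Type*} [CommRing R] [Fintype ι] [Fintype κ]

def HasSquareWeightedZeroSum (x : ι → R) : Prop :=
  ∃ w : ι → R, (∀ i, IsSquare (w i)) ∧ w ≠ 0 ∧ ∑ i, w i * x i = 0

theorem HasSquareWeightedZeroSum.of_comp {x : κ → R} {f : ι → κ} (hf : Injective f)
    (h : HasSquareWeightedZeroSum (x ∘ f)) : HasSquareWeightedZeroSum x := by
  obtain ⟨w, hsq, hne, hsum⟩ := h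
  have hext : ∀ j, extend f w 0 (f j) = w j := hf.extend_apply w 0
  have hout : ∀ i ∉ Set.range f, extend f w 0 i = 0 := fun i hi => extend_apply' _ _ _ hi
  refine ⟨extend f w 0, fun i => ?_, fun h0 => hne (funext fun j => by simp [← hext, h0]), ?_⟩
  · by_cases hi : i ∈ Set.range f
    · obtain ⟨j, rfl⟩ := hi
      exact hext j ▸ hsq j
    · exact hout i hi ▸ IsSquare.zero
  · rw [← hsum, Fintype.sum_of_injective f hf]
    · intro i hi
      rw [hout i hi, zero_mul]
    · intro j
      rw [hext, comp_apply]

theorem HasSquareWeightedZeroSum.of_ringEquiv_prod {T S : Type*} [CommRing T] [CommRing S]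
    (e : T ≃+* R × S) {x : ι → T} (h : HasSquareWeightedZeroSum fun i => (e (x i)).1) :
    HasSquareWeightedZeroSum x := by
  obtain ⟨w, hsq, hne, hsum⟩ := h
  refine ⟨fun i => e.symm (w i, 0), fun i => ?_, fun h0 => hne (funext fun i => ?_), ?_⟩
  · obtain ⟨r, hr⟩ := hsq i
    exact ⟨e.symm (r, 0), by simp only [← map_mul, Prod.mk_mul_mk, mul_zero, hr]⟩
  · simpa using congrArg (fun t => (e t).1) (congrFun h0 i)
  · apply e.injective
    ext
    · simpa [Prod.fst_sum] using hsum
    · simp [Prod.snd_sum]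

end SquareWeightedZeroSum

theorem hasWZSSubseq_nonzeroSquares_iff {n k : ℕ} (x : Fin k → ZMod n) :
    HasWZSSubseq (nonzeroSquares n) x ↔ HasSquareWeightedZeroSum x := by
  classical
  constructor
  · rintro ⟨I, ⟨i, hi⟩, w, hw, hsum⟩
    refine ⟨fun j => if j ∈ I then w j else 0, fun j => ?_, fun h0 => (hw i hi).1 ?_, ?_⟩
    · by_cases hj : j ∈ I
      · simp only [hj, if_true]
        obtain ⟨y, hy⟩ := (hw j hj).2
        exact ⟨y, by rw [← hy, sq]⟩
      · simp [hj]
    · simpa [hi] using congrFun h0 i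
    · simpa [ite_mul, Finset.sum_ite_mem] using hsum
  · rintro ⟨w, hsq, hne, hsum⟩
    obtain ⟨i, hi⟩ := Function.ne_iff.mp hne
    refine ⟨univ.filter (w · ≠ 0), ⟨i, by simpa using hi⟩, w,
      fun j hj => ⟨(mem_filter.mp hj).2, ?_⟩, ?_⟩
    · obtain ⟨y, hy⟩ := hsq j
      exact ⟨y, by rw [hy, sq]⟩
    · rw [Finset.sum_filter_of_ne fun j _ hj => left_ne_zero_of_mul hj, hsum]

open Polynomial in
theorem FiniteField.exists_mul_sq_add_mul_sq_add_eq_zero {F : Type*} [Field F] [Fintype F]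
    (hF : Fintype.card F % 2 = 1) {a b : F} (ha : a ≠ 0) (hb : b ≠ 0) (c : F) :
    ∃ x y : F, a * x ^ 2 + b * y ^ 2 + c = 0 := by
  have hf : (C a * X ^ 2).degree = 2 := degree_C_mul_X_pow 2 ha
  have hg : (C b * X ^ 2 + C c).degree = 2 := by
    rw [degree_add_C (by rw [degree_C_mul_X_pow 2 hb]; norm_num), degree_C_mul_X_pow 2 hb]
    rfl
  obtain ⟨x, y, hxy⟩ := FiniteField.exists_root_sum_quadratic hf hg hF
  exact ⟨x, y, by simpa [add_assoc] using hxy⟩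

open Polynomial in
theorem ZMod.isSquare_natCast_of_isSquare_prime {p : ℕ} [Fact p.Prime] (hp2 : p ≠ 2) {a : ℕ}
    (ha : ¬ p ∣ a) (hsq : IsSquare (a : ZMod p)) (e : ℕ) : IsSquare (a : ZMod (p ^ e)) := by
  obtain ⟨b, hb⟩ := hsq
  obtain ⟨B, rfl⟩ := ZMod.intCast_surjective b
  have hroot : (p : ℤ) ∣ B ^ 2 - a := by
    rw [← ZMod.intCast_zmod_eq_zero_iff_dvd]
    push_cast
    rw [hb, sq, sub_self]
  have hderiv : ¬ (p : ℤ) ∣ 2 * B := by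
    have hB : (B : ZMod p) ≠ 0 := by
      rintro hB
      rw [hB, mul_zero, ZMod.natCast_eq_zero_iff] at hb
      exact ha hb
    rw [← ZMod.intCast_zmod_eq_zero_iff_dvd, Int.cast_mul, Int.cast_ofNat]
    exact mul_ne_zero (Ring.two_ne_zero (by rwa [ZMod.ringChar_zmod_n])) hB
  have hF : aeval (B : ℤ_[p]) (X ^ 2 - C (a : ℤ)) = ((B ^ 2 - a : ℤ) : ℤ_[p]) := by simp
  have hF' : aeval (B : ℤ_[p]) (derivative (X ^ 2 - C (a : ℤ))) = ((2 * B : ℤ) : ℤ_[p]) := by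
    simp [map_ofNat]
  have hnorm : ‖((2 * B : ℤ) : ℤ_[p])‖ = 1 :=
    le_antisymm (PadicInt.norm_le_one _)
      (not_lt.1 ((PadicInt.norm_int_lt_one_iff_dvd _).not.2 hderiv))
  obtain ⟨z, hz, -⟩ := hensels_lemma (F := X ^ 2 - C (a : ℤ)) (a := (B : ℤ_[p]))
    (by rw [hF, hF', hnorm, one_pow]; exact (PadicInt.norm_int_lt_one_iff_dvd _).2 hroot)
  refine ⟨PadicInt.toZModPow e z, ?_⟩
  have hz2 : z * z = a := by simpa [sub_eq_zero, sq] using hz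
  rw [← map_mul, hz2, map_natCast]

namespace ZMod

variable {p : ℕ} [hp : Fact p.Prime] {e : ℕ}

theorem natCast_self_pow_eq_zero_iff {v : ℕ} : (p : ZMod (p ^ e)) ^ v = 0 ↔ e ≤ v := by
  rw [← Nat.cast_pow, natCast_eq_zero_iff, Nat.pow_dvd_pow_iff_le_right hp.out.one_lt]

theorem isUnit_iff_castHom_ne_zero (he : e ≠ 0) {r : ZMod (p ^ e)} :
    IsUnit r ↔ castHom (dvd_pow_self p he) (ZMod p) r ≠ 0 := by
  rw [← natCast_zmod_val r, isUnit_natCast_iff_not_dvd_pow hp.out (Nat.pos_of_ne_zero he),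
    map_natCast, Ne, natCast_eq_zero_iff]

theorem exists_eq_pow_mul_of_ne_zero {y : ZMod (p ^ e)} (hy : y ≠ 0) :
    ∃ v < e, ∃ u : ZMod (p ^ e), IsUnit u ∧ y = p ^ v * u := by
  obtain ⟨v, m, hpm, hm⟩ := Nat.exists_eq_pow_mul_and_not_dvd ((val_ne_zero y).2 hy) p hp.out.ne_one
  have hy' : y = p ^ v * m := by rw [← natCast_zmod_val y, hm]; push_cast; rfl
  have hv : v < e := by
    by_contra! hev
    exact hy (by rw [hy', natCast_self_pow_eq_zero_iff.2 hev, zero_mul])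
  exact ⟨v, hv, m, (isUnit_natCast_iff_not_dvd_pow hp.out (by omega)).2 hpm, hy'⟩

theorem exists_sum_sq_mul_eq_zero (hp2 : p ≠ 2) (he : e ≠ 0) (u : Fin 3 → ZMod (p ^ e))
    (hu : ∀ j, IsUnit (u j)) :
    ∃ r : Fin 3 → ZMod (p ^ e), IsUnit (r 2) ∧ ∑ j, r j ^ 2 * u j = 0 := by
  set π := castHom (dvd_pow_self p he) (ZMod p)
  have hπu : ∀ j, π (u j) ≠ 0 := fun j => ((hu j).map π).ne_zero
  have hcard : Fintype.card (ZMod p) % 2 = 1 := by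
    rw [card]; exact Nat.odd_iff.1 (hp.out.odd_of_ne_two hp2)
  obtain ⟨x, y, hxy⟩ :=
    FiniteField.exists_mul_sq_add_mul_sq_add_eq_zero hcard (hπu 0) (hπu 1) (π (u 2))
  obtain ⟨r₀, rfl⟩ := castHom_surjective (dvd_pow_self p he) x
  obtain ⟨r₁, rfl⟩ := castHom_surjective (dvd_pow_self p he) y
  set t := -(r₀ ^ 2 * u 0 + r₁ ^ 2 * u 1) * ↑(hu 2).unit⁻¹ with ht
  have hπt : π t = 1 := by
    rw [ht, map_mul, map_units_inv, IsUnit.unit_spec, mul_inv_eq_one₀ (hπu 2)]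
    simp only [map_neg, map_add, map_mul, map_pow]
    linear_combination -hxy
  have hπt' : ((t.val : ℕ) : ZMod p) = 1 := by
    rw [← hπt, ← map_natCast π, natCast_zmod_val]
  obtain ⟨r₂, hr₂⟩ : IsSquare t := by
    rw [← natCast_zmod_val t]
    refine isSquare_natCast_of_isSquare_prime hp2 ?_ (by rw [hπt']; exact IsSquare.one) e
    rw [← natCast_eq_zero_iff, hπt']
    exact one_ne_zero
  refine ⟨![r₀, r₁, r₂], show IsUnit r₂ from ?_, ?_⟩
  · rw [isUnit_iff_castHom_ne_zero he]
    intro h0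
    rw [hr₂, map_mul, h0, mul_zero] at hπt
    exact zero_ne_one hπt
  · simp only [Fin.sum_univ_three, Matrix.cons_val_zero, Matrix.cons_val_one, Matrix.cons_val_two,
      Matrix.head_cons, Matrix.tail_cons, sq r₂, ← hr₂, ht]
    linear_combination (-(r₀ ^ 2 * u 0 + r₁ ^ 2 * u 1)) * (hu 2).val_inv_mul

theorem hasSquareWeightedZeroSum_of_pow_mul_eq (hp2 : p ≠ 2) (he : e ≠ 0)
    {y : Fin 3 → ZMod (p ^ e)} {V : ℕ} (hV : V < e) (k : Fin 3 → ℕ) (u : Fin 3 → ZMod (p ^ e))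
    (hu : ∀ j, IsUnit (u j)) (hy : ∀ j, (p : ZMod (p ^ e)) ^ (2 * k j) * y j = p ^ V * u j) :
    HasSquareWeightedZeroSum y := by
  obtain ⟨r, hr₂, hr⟩ := exists_sum_sq_mul_eq_zero hp2 he u hu
  refine ⟨fun j => (p ^ k j * r j) ^ 2, fun j => ⟨_, sq _⟩, fun h0 => ?_, ?_⟩
  · have hpk : (p : ZMod (p ^ e)) ^ (2 * k 2) = 0 := by
      have h := congrFun h0 2
      rw [Pi.zero_apply, mul_pow, ← pow_mul, mul_comm (k 2)] at h
      exact (hr₂.pow 2).mul_left_eq_zero.1 h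
    have h := hy 2
    rw [hpk, zero_mul, eq_comm, (hu 2).mul_left_eq_zero, natCast_self_pow_eq_zero_iff] at h
    omega
  · calc ∑ j, (p ^ k j * r j) ^ 2 * y j = ∑ j, p ^ V * (r j ^ 2 * u j) :=
          Finset.sum_congr rfl fun j _ => by linear_combination r j ^ 2 * hy j
      _ = 0 := by rw [← mul_sum, hr, mul_zero]

theorem hasSquareWeightedZeroSum_fin_five (hp2 : p ≠ 2) (he : e ≠ 0)
    (y : Fin 5 → ZMod (p ^ e)) : HasSquareWeightedZeroSum y := by
  classical
  have : Fact (1 < p ^ e) := ⟨Nat.one_lt_pow he hp.out.one_lt⟩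
  by_cases h0 : ∃ i, y i = 0
  · obtain ⟨i, hi⟩ := h0
    refine ⟨Pi.single i 1, fun j => ?_, by simp, by simp [Pi.single_apply, hi]⟩
    rcases eq_or_ne j i with rfl | hj <;> simp [*]
  simp only [not_exists] at h0
  choose v hv u hu hyu using fun i => exists_eq_pow_mul_of_ne_zero (h0 i)
  obtain ⟨a, b, c, hab, hac, hbc, hparb, hparc⟩ :
      ∃ a b c, a ≠ b ∧ a ≠ c ∧ b ≠ c ∧ v a % 2 = v b % 2 ∧ v a % 2 = v c % 2 := by
    obtain ⟨s, hs⟩ :=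
      Fintype.exists_lt_card_fiber_of_mul_lt_card (fun i => (v i : ZMod 2)) (n := 2) (by simp)
    obtain ⟨a, b, c, ha, hb, hc, hab, hac, hbc⟩ := Finset.two_lt_card_iff.1 hs
    simp only [mem_filter, mem_univ, true_and] at ha hb hc
    exact ⟨a, b, c, hab, hac, hbc, (natCast_eq_natCast_iff' _ _ _).1 (ha.trans hb.symm),
      (natCast_eq_natCast_iff' _ _ _).1 (ha.trans hc.symm)⟩
  set f := ![a, b, c]
  have hf : Injective f := by
    intro i j
    fin_cases i <;> fin_cases j <;> simp [f, hab, hac, hbc, hab.symm, hac.symm, hbc.symm]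
  set V := max (v a) (max (v b) (v c))
  have hva := hv a
  have hvb := hv b
  have hvc := hv c
  refine .of_comp hf (hasSquareWeightedZeroSum_of_pow_mul_eq hp2 he (V := V) (by omega)
    (fun j => (V - v (f j)) / 2) (u ∘ f) (fun j => hu _) fun j => ?_)
  rw [comp_apply, comp_apply, hyu, ← mul_assoc, ← pow_add]
  congr 2
  have key : ∀ i, v i % 2 = v a % 2 → v i ≤ V → 2 * ((V - v i) / 2) + v i = V :=
    fun i _ _ => by omega
  fin_cases j
  exacts [key a rfl (by omega), key b hparb.symm (by omega), key c hparc.symm (by omega)]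

end ZMod

theorem ZMod.hasSquareWeightedZeroSum_fin_five_of_prime_dvd {n p : ℕ} [hp : Fact p.Prime]
    (hp2 : p ≠ 2) (hn : n ≠ 0) (hpn : p ∣ n) (x : Fin 5 → ZMod n) :
    HasSquareWeightedZeroSum x := by
  have he : n.factorization p ≠ 0 := (hp.out.factorization_pos_of_dvd hn hpn).ne'
  have hcop := (Nat.coprime_ordCompl hp.out hn).pow_left (n.factorization p)
  have hmul := Nat.ordProj_mul_ordCompl_eq_self n p
  generalize n.factorization p = e at he hcop hmul
  generalize n / p ^ e = m at hcop hmul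
  subst hmul
  exact .of_ringEquiv_prod (chineseRemainder hcop) (hasSquareWeightedZeroSum_fin_five hp2 he _)

section Descent

variable {p : ℕ} [hp : Fact p.Prime] {N : ℤ}

theorem Int.prime_dvd_of_dvd_sq_sub_mul_sq (hN : ¬ IsSquare (N : ZMod p)) {a b : ℤ}
    (h : (p : ℤ) ∣ a ^ 2 - N * b ^ 2) : (p : ℤ) ∣ a ∧ (p : ℤ) ∣ b := by
  simp only [← ZMod.intCast_zmod_eq_zero_iff_dvd] at h ⊢
  push_cast at h
  have hb : (b : ZMod p) = 0 := by
    by_contra hb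
    exact hN ⟨a / b, by field_simp; linear_combination -h⟩
  refine ⟨?_, hb⟩
  simpa [hb] using h

/-- Descent: `p` divides `a` and `b`, then `c` and `d`, and the form scales by `p²`. -/
theorem Int.pow_dvd_of_pow_dvd_quaternary (hN : ¬ IsSquare (N : ZMod p)) (k : ℕ) {a b c d : ℤ}
    (h : (p : ℤ) ^ (2 * k) ∣ a ^ 2 - N * b ^ 2 + p * (c ^ 2 - N * d ^ 2)) :
    (p : ℤ) ^ k ∣ a ∧ (p : ℤ) ^ k ∣ b ∧ (p : ℤ) ^ k ∣ c ∧ (p : ℤ) ^ k ∣ d := by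
  induction k generalizing a b c d with
  | zero => simp
  | succ k ih =>
    have hp0 : (p : ℤ) ≠ 0 := by exact_mod_cast hp.out.ne_zero
    have h2 : (p : ℤ) ^ 2 ∣ a ^ 2 - N * b ^ 2 + p * (c ^ 2 - N * d ^ 2) :=
      (pow_dvd_pow _ (by omega)).trans h
    obtain ⟨⟨a, rfl⟩, ⟨b, rfl⟩⟩ := prime_dvd_of_dvd_sq_sub_mul_sq hN
      ((dvd_add_left (dvd_mul_right _ _)).1 ((dvd_pow_self _ two_ne_zero).trans h2))
    have h2' : (p : ℤ) * p ∣ p * (c ^ 2 - N * d ^ 2) := by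
      rw [← sq]
      exact (dvd_add_right ⟨a ^ 2 - N * b ^ 2, by ring⟩).1 h2
    obtain ⟨⟨c, rfl⟩, ⟨d, rfl⟩⟩ :=
      prime_dvd_of_dvd_sq_sub_mul_sq hN ((mul_dvd_mul_iff_left hp0).1 h2')
    have hrec : (p : ℤ) ^ (2 * k) ∣ a ^ 2 - N * b ^ 2 + p * (c ^ 2 - N * d ^ 2) := by
      have hscale : (p * a) ^ 2 - N * (p * b) ^ 2 + p * ((p * c) ^ 2 - N * (p * d) ^ 2) =
          (p : ℤ) ^ 2 * (a ^ 2 - N * b ^ 2 + p * (c ^ 2 - N * d ^ 2)) := by ring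
      rw [hscale, mul_add_one, pow_add, mul_comm] at h
      exact (mul_dvd_mul_iff_left (pow_ne_zero 2 hp0)).1 h
    obtain ⟨ha, hb, hc, hd⟩ := ih hrec
    simp only [pow_succ']
    exact ⟨mul_dvd_mul_left _ ha, mul_dvd_mul_left _ hb, mul_dvd_mul_left _ hc,
      mul_dvd_mul_left _ hd⟩

end Descent

theorem Int.natCast_dvd_of_forall_ordProj_dvd {m : ℕ} (hm : m ≠ 0) {a : ℤ}
    (h : ∀ p ∈ m.primeFactors, (p : ℤ) ^ m.factorization p ∣ a) : (m : ℤ) ∣ a := by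
  rw [Int.natCast_dvd]
  refine (Nat.dvd_iff_prime_pow_dvd_dvd _ _).2 fun p k hp hpk => ?_
  rcases k.eq_zero_or_pos with rfl | hk
  · simp
  have hpm : p ∈ m.primeFactors :=
    Nat.mem_primeFactors.2 ⟨hp, (dvd_pow_self p hk.ne').trans hpk, hm⟩
  exact (Nat.pow_dvd_pow p ((hp.pow_dvd_iff_le_factorization hm).1 hpk)).trans
    (by exact_mod_cast Int.natCast_dvd.1 (h p hpm))

theorem exists_nonsquare_and_pow_dvd_sub {m : ℕ} (hm : Odd m) :
    ∃ N P : ℤ, ∀ p ∈ m.primeFactors,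
      ¬ IsSquare (N : ZMod p) ∧ (p : ℤ) ^ (2 * m.factorization p) ∣ P - p := by
  have hprime : ∀ p ∈ m.primeFactors, p.Prime := fun p hp => Nat.prime_of_mem_primeFactors hp
  have hnonsq : ∀ p, ∃ c : ℕ, p ∈ m.primeFactors → ¬ IsSquare (c : ZMod p) := by
    intro p
    by_cases hp : p ∈ m.primeFactors
    · have : Fact p.Prime := ⟨hprime p hp⟩
      have hp2 : ringChar (ZMod p) ≠ 2 := by
        rw [ZMod.ringChar_zmod_n]
        rintro rfl
        exact Nat.not_even_iff_odd.2 hm (even_iff_two_dvd.2 (Nat.dvd_of_mem_primeFactors hp))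
      obtain ⟨b, hb⟩ := FiniteField.exists_nonsquare hp2
      exact ⟨b.val, fun _ => by rwa [ZMod.natCast_zmod_val]⟩
    · exact ⟨0, fun h => absurd h hp⟩
  choose ν hν using hnonsq
  have hcop : Set.Pairwise m.primeFactors (Nat.Coprime on id) := fun p hp q hq hpq =>
    (Nat.coprime_primes (hprime p hp) (hprime q hq)).2 hpq
  obtain ⟨N, hN⟩ := Nat.chineseRemainderOfFinset ν id m.primeFactors
    (fun p hp => (hprime p hp).ne_zero) hcop
  obtain ⟨P, hP⟩ := Nat.chineseRemainderOfFinset id (fun p => p ^ (2 * m.factorization p))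
    m.primeFactors (fun p hp => pow_ne_zero _ (hprime p hp).ne_zero)
    (fun p hp q hq hpq => (hcop hp hq hpq).pow _ _)
  refine ⟨N, P, fun p hp => ⟨?_, ?_⟩⟩
  · rw [Int.cast_natCast, (ZMod.natCast_eq_natCast_iff _ _ _).2 (hN p hp)]
    exact hν p hp
  · exact_mod_cast dvd_sub_comm.1 (Nat.modEq_iff_dvd.1 (hP p hp))

theorem dvd_of_sq_dvd_quaternary {m : ℕ} (hm : m ≠ 0) {N P : ℤ}
    (hNP : ∀ p ∈ m.primeFactors,
      ¬ IsSquare (N : ZMod p) ∧ (p : ℤ) ^ (2 * m.factorization p) ∣ P - p)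
    {a b c d : ℤ} (h : (m : ℤ) ^ 2 ∣ a ^ 2 - N * b ^ 2 + P * (c ^ 2 - N * d ^ 2)) :
    (m : ℤ) ∣ a ∧ (m : ℤ) ∣ b ∧ (m : ℤ) ∣ c ∧ (m : ℤ) ∣ d := by
  have hloc : ∀ p ∈ m.primeFactors, (p : ℤ) ^ m.factorization p ∣ a ∧
      (p : ℤ) ^ m.factorization p ∣ b ∧ (p : ℤ) ^ m.factorization p ∣ c ∧
      (p : ℤ) ^ m.factorization p ∣ d := by
    intro p hp
    have : Fact p.Prime := ⟨Nat.prime_of_mem_primeFactors hp⟩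
    obtain ⟨hN, hP⟩ := hNP p hp
    have hpm : (p : ℤ) ^ (2 * m.factorization p) ∣ (m : ℤ) ^ 2 := by
      rw [mul_comm, pow_mul]
      exact pow_dvd_pow_of_dvd (by exact_mod_cast Nat.ordProj_dvd m p) 2
    refine Int.pow_dvd_of_pow_dvd_quaternary hN _ ?_
    have hdiff := dvd_sub (hpm.trans h) (hP.mul_right (c ^ 2 - N * d ^ 2))
    rwa [show a ^ 2 - N * b ^ 2 + P * (c ^ 2 - N * d ^ 2) - (P - p) * (c ^ 2 - N * d ^ 2) =
      a ^ 2 - N * b ^ 2 + p * (c ^ 2 - N * d ^ 2) by ring] at hdiff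
  exact ⟨Int.natCast_dvd_of_forall_ordProj_dvd hm fun p hp => (hloc p hp).1,
    Int.natCast_dvd_of_forall_ordProj_dvd hm fun p hp => (hloc p hp).2.1,
    Int.natCast_dvd_of_forall_ordProj_dvd hm fun p hp => (hloc p hp).2.2.1,
    Int.natCast_dvd_of_forall_ordProj_dvd hm fun p hp => (hloc p hp).2.2.2⟩

theorem ZMod.exists_not_hasSquareWeightedZeroSum {n : ℕ} (hn : n ≠ 0) (hodd : Odd n)
    (hsq : IsSquare n) : ∃ x : Fin 4 → ZMod n, ¬ HasSquareWeightedZeroSum x := by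
  obtain ⟨m, rfl⟩ := hsq
  have hm : m ≠ 0 := by rintro rfl; simp at hn
  have : NeZero (m * m) := ⟨hn⟩
  obtain ⟨N, P, hNP⟩ := exists_nonsquare_and_pow_dvd_sub (Nat.odd_mul.1 hodd).1
  refine ⟨![1, -N, P, -(N * P)], ?_⟩
  rintro ⟨w, hw, hne, hsum⟩
  choose s hs using hw
  set S : Fin 4 → ℤ := fun i => (s i).val
  have hS : ∀ i, ((S i : ℤ) : ZMod (m * m)) = s i := fun i => by simp [S]
  have hzero : ∀ i, (m : ℤ) ∣ S i → w i = 0 := fun i hi => by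
    rw [hs, ← hS, ← Int.cast_mul, ZMod.intCast_zmod_eq_zero_iff_dvd, Nat.cast_mul]
    exact mul_dvd_mul hi hi
  have hdvd : (m : ℤ) ^ 2 ∣ S 0 ^ 2 - N * S 1 ^ 2 + P * (S 2 ^ 2 - N * S 3 ^ 2) := by
    rw [sq (m : ℤ), ← Nat.cast_mul, ← ZMod.intCast_zmod_eq_zero_iff_dvd, ← hsum]
    simp only [Fin.sum_univ_four, hs, ← hS]
    push_cast
    ring
  obtain ⟨h0, h1, h2, h3⟩ := dvd_of_sq_dvd_quaternary hm hNP hdvd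
  apply hne
  funext i
  fin_cases i
  exacts [hzero 0 h0, hzero 1 h1, hzero 2 h2, hzero 3 h3]

theorem stmt18 (n : ℕ) (hn : 1 < n) (hodd : Odd n) (hsq : IsSquare n) :
    IsLeast {k | DConst n (nonzeroSquares n) k} 5 := by
  have hp : Fact n.minFac.Prime := ⟨Nat.minFac_prime hn.ne'⟩
  have hp2 : n.minFac ≠ 2 := fun h2 =>
    Nat.not_even_iff_odd.2 hodd (even_iff_two_dvd.2 (h2 ▸ Nat.minFac_dvd n))
  refine ⟨⟨by norm_num, fun x => (hasWZSSubseq_nonzeroSquares_iff x).2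
    (ZMod.hasSquareWeightedZeroSum_fin_five_of_prime_dvd hp2 (by omega) (Nat.minFac_dvd n) x)⟩,
    fun k ⟨_, hk⟩ => ?_⟩
  by_contra! hk5
  obtain ⟨x, hx⟩ := ZMod.exists_not_hasSquareWeightedZeroSum (by omega) hodd hsq
  exact hx (((hasWZSSubseq_nonzeroSquares_iff _).1 (hk (x ∘ Fin.castLE (by omega)))).of_comp
    (Fin.castLE_injective _))
end
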